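/- arXiv:2507.13853 — 5 statements merged into one kernel-verified Lean document; each statement's English description precedes it below -/
import Mathlib

section
/- Fix integers K ≥ 1, m ≥ 1, N ≥ 2 and p ≠ q in {1,…,N}. For each k ∈ {0,…,K−1} let W_k > 0 and ε_k > 0, let φ_{j,k} : ℝ^m → ℝ (j = 1,…,N) be twice continuously differentiable and nonnegative, and let c_{p,k} : (ℝ^m)^N → ℝ be twice continuously differentiable. Define u_p : (ℝ^m)^{NK} → ℝ by u_p(x) = Σ_k [ W_k·φ_{p,k}(x_{p,k})/(Σ_{j=1}^N φ_{j,k}(x_{j,k}) + ε_k) − c_{p,k}(x_{p,k}, x_{−p,k}) ]. Then the mixed second-derivative blocks ∂²u_p/∂x_p∂x_q and ∂²u_p/∂x_q∂x_p (each block-diagonal across stages k) are equal if and only if for every k and every x: f_{3,k}·∇φ_{q,k}(x_{q,k})∇φ_{p,k}(x_{p,k})ᵀ − ∂²c_{p,k}/∂x_{p,k}∂x_{q,k} = f_{3,k}·∇φ_{p,k}(x_{p,k})∇φ_{q,k}(x_{q,k})ᵀ − ∂²c_{p,k}/∂x_{q,k}∂x_{p,k}, where Φ_k = Σ_j φ_{j,k}(x_{j,k})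 and f_{3,k} = −W_k·(Φ_k + ε_k − 2φ_{p,k}(x_{p,k}))/(Φ_k + ε_k)³. -/
/-!
The profit is a sum over stages of functions of the stage variables `x_{·,k}`, so each mixed
block of its Hessian is block diagonal, with `k`-th block the corresponding block of the stage
profit `T_k - c_k`. For the Tullock share `T = W φ_p / (Φ + ε)` one has
`∂_{x_q} T = -W φ_p ∇φ_q / (Φ + ε)²`, whose `x_p`-derivative is `f₃ ∇φ_q ∇φ_pᵀ`; the other order
follows from the symmetry of second derivatives of a `C²` function.
-/

open Matrix

noncomputable section

/-- Second directional derivative of `f` at `x`: first along `v`, then along `w`. -/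
def secondDeriv {E : Type*} [NormedAddCommGroup E] [NormedSpace ℝ E]
    (f : E → ℝ) (x v w : E) : ℝ :=
  fderiv ℝ (fun y => fderiv ℝ f y v) x w

/-- The gradient of `f : ℝ^m → ℝ` at `x`, as a vector of partial derivatives. -/
def gradVec {m : ℕ} (f : (Fin m → ℝ) → ℝ) (x : Fin m → ℝ) : Fin m → ℝ :=
  fun a => fderiv ℝ f x (Pi.single a 1)

/-- Basis vector of the joint space `(ℝ^m)^{N×K}` for coordinate `a` of the
stage-`k` variable of player `j`. -/
def eJ (N K m : ℕ) (j : Fin N) (k : Fin K) (a : Fin m) :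
    Fin N → Fin K → Fin m → ℝ :=
  Pi.single j (Pi.single k (Pi.single a 1))

/-- Basis vector of the stage space `(ℝ^m)^N` for coordinate `a` of player `j`'s
stage variable. -/
def eS (N m : ℕ) (j : Fin N) (a : Fin m) : Fin N → Fin m → ℝ :=
  Pi.single j (Pi.single a 1)

section SecondDeriv

variable {E F : Type*} [NormedAddCommGroup E] [NormedSpace ℝ E]
  [NormedAddCommGroup F] [NormedSpace ℝ F]

theorem ContDiff.differentiable_fderiv_apply {f : E → ℝ} (hf : ContDiff ℝ 2 f) (v : E) :
    Differentiable ℝ (fun y => fderiv ℝ f y v) :=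
  ((hf.fderiv_right le_rfl).differentiable one_ne_zero).clm_apply (differentiable_const v)

theorem secondDeriv_eq_fderiv_fderiv {f : E → ℝ} (hf : ContDiff ℝ 2 f) (x v w : E) :
    secondDeriv f x v w = fderiv ℝ (fderiv ℝ f) x w v := by
  have hdf := (hf.fderiv_right le_rfl).differentiable one_ne_zero x
  simp [secondDeriv, fderiv_clm_apply hdf (differentiableAt_const v)]

theorem secondDeriv_comm {f : E → ℝ} (hf : ContDiff ℝ 2 f) (x v w : E) :
    secondDeriv f x v w = secondDeriv f x w v := by
  simp only [secondDeriv_eq_fderiv_fderiv hf]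
  exact hf.contDiffAt.isSymmSndFDerivAt (by simp) w v

@[simp]
theorem secondDeriv_zero_left (f : E → ℝ) (x w : E) : secondDeriv f x 0 w = 0 := by
  simp [secondDeriv]

@[simp]
theorem secondDeriv_zero_right (f : E → ℝ) (x v : E) : secondDeriv f x v 0 = 0 := by
  simp [secondDeriv]

theorem secondDeriv_sub {f g : E → ℝ} (hf : ContDiff ℝ 2 f) (hg : ContDiff ℝ 2 g) (x v w : E) :
    secondDeriv (fun y => f y - g y) x v w = secondDeriv f x v w - secondDeriv g x v w := by
  have h : (fun y => fderiv ℝ (fun z => f z - g z) y v) =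
      fun y => fderiv ℝ f y v - fderiv ℝ g y v := by
    funext y
    rw [fderiv_fun_sub (hf.differentiable two_ne_zero y) (hg.differentiable two_ne_zero y)]
    rfl
  rw [secondDeriv, h, fderiv_fun_sub (hf.differentiable_fderiv_apply v x)
    (hg.differentiable_fderiv_apply v x)]
  rfl

theorem secondDeriv_sum {ι : Type*} (s : Finset ι) {f : ι → E → ℝ}
    (hf : ∀ i ∈ s, ContDiff ℝ 2 (f i)) (x v w : E) :
    secondDeriv (fun y => ∑ i ∈ s, f i y) x v w = ∑ i ∈ s, secondDeriv (f i) x v w := by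
  have h : (fun y => fderiv ℝ (fun z => ∑ i ∈ s, f i z) y v) =
      fun y => ∑ i ∈ s, fderiv ℝ (f i) y v := by
    funext y
    rw [fderiv_fun_sum fun i hi => (hf i hi).differentiable two_ne_zero y]
    simp
  rw [secondDeriv, h,
    fderiv_fun_sum fun i hi => (hf i hi).differentiable_fderiv_apply v x]
  simp [secondDeriv]

theorem secondDeriv_comp_continuousLinearMap {g : F → ℝ} (hg : ContDiff ℝ 2 g) (L : E →L[ℝ] F)
    (x v w : E) :
    secondDeriv (fun y => g (L y)) x v w = secondDeriv g (L x) (L v) (L w) := by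
  have h : (fun y => fderiv ℝ (fun z => g (L z)) y v) = fun y => fderiv ℝ g (L y) (L v) := by
    funext y
    rw [show (fun z => g (L z)) = g ∘ L from rfl,
      fderiv_comp y (hg.differentiable two_ne_zero _) L.differentiableAt, L.fderiv]
    rfl
  rw [secondDeriv, h, show (fun y => fderiv ℝ g (L y) (L v)) = (fun z => fderiv ℝ g z (L v)) ∘ L
    from rfl, fderiv_comp x (hg.differentiable_fderiv_apply _ _) L.differentiableAt, L.fderiv]
  rfl

theorem secondDeriv_eq_of_hasDerivAt {f : E → ℝ} (hf : ContDiff ℝ 2 f) {x v w : E} {d : ℝ}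
    (h : HasDerivAt (fun t : ℝ => fderiv ℝ f (x + t • w) v) d 0) :
    secondDeriv f x v w = d :=
  ((hf.differentiable_fderiv_apply v x).lineDeriv_eq_fderiv).symm.trans
    (show HasLineDerivAt ℝ (fun y => fderiv ℝ f y v) d x w from h).lineDeriv

end SecondDeriv

section Tullock

variable {ι E : Type*} [Fintype ι] [NormedAddCommGroup E] [NormedSpace ℝ E]

theorem hasDerivAt_apply_line {ψ : E → ℝ} {y : ι → E} {j : ι} (hψ : DifferentiableAt ℝ ψ (y j))
    (w : ι → E) :
    HasDerivAt (fun t : ℝ => ψ ((y + t • w) j)) (fderiv ℝ ψ (y j) (w j)) 0 :=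
  (hψ.hasFDerivAt.comp y (ContinuousLinearMap.proj (R := ℝ) (φ := fun _ : ι => E) j).hasFDerivAt
    ).hasLineDerivAt w

theorem sum_apply_pi_single [DecidableEq ι] (L : ι → E →L[ℝ] ℝ) (q : ι) (a : E) :
    ∑ j, L j ((Pi.single q a : ι → E) j) = L q a := by
  rw [Finset.sum_eq_single q (fun j _ hj => by simp [Pi.single_eq_of_ne hj]) (by simp)]
  simp

def tullockShare (W ε : ℝ) (φ : ι → E → ℝ) (p : ι) (y : ι → E) : ℝ :=
  W * φ p (y p) / (∑ j, φ j (y j) + ε)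

variable {W ε : ℝ} {φ : ι → E → ℝ}

theorem contDiff_tullockShare (hφ : ∀ j, ContDiff ℝ 2 (φ j))
    (hden : ∀ y : ι → E, ∑ j, φ j (y j) + ε ≠ 0) (p : ι) : ContDiff ℝ 2 (tullockShare W ε φ p) :=
  have hcomp : ∀ j, ContDiff ℝ 2 (fun y : ι → E => φ j (y j)) := fun j =>
    (hφ j).comp (contDiff_apply ℝ E j)
  (contDiff_const.mul (hcomp p)).div ((ContDiff.sum fun j _ => hcomp j).add contDiff_const) hden

theorem fderiv_tullockShare (hφ : ∀ j, ContDiff ℝ 2 (φ j))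
    (hden : ∀ y : ι → E, ∑ j, φ j (y j) + ε ≠ 0) (p : ι) (y v : ι → E) :
    fderiv ℝ (tullockShare W ε φ p) y v =
      W * (fderiv ℝ (φ p) (y p) (v p) * (∑ j, φ j (y j) + ε) -
        φ p (y p) * ∑ j, fderiv ℝ (φ j) (y j) (v j)) / (∑ j, φ j (y j) + ε) ^ 2 := by
  have hdiff : ∀ j, DifferentiableAt ℝ (φ j) (y j) := fun j =>
    (hφ j).differentiable two_ne_zero _
  have hnum := (hasDerivAt_apply_line (hdiff p) v).const_mul W
  have hB := (HasDerivAt.fun_sum fun j (_ : j ∈ Finset.univ) =>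
    hasDerivAt_apply_line (hdiff j) v).add_const ε
  have hT : HasLineDerivAt ℝ (tullockShare W ε φ p) _ y v :=
    hnum.div hB (by simpa using hden y)
  rw [← ((contDiff_tullockShare hφ hden p).differentiable two_ne_zero y).lineDeriv_eq_fderiv,
    hT.lineDeriv]
  simp only [zero_smul, add_zero]
  ring

theorem fderiv_tullockShare_pi_single_of_ne [DecidableEq ι] (hφ : ∀ j, ContDiff ℝ 2 (φ j))
    (hden : ∀ y : ι → E, ∑ j, φ j (y j) + ε ≠ 0) {p q : ι} (hqp : q ≠ p) (y : ι → E) (a : E) :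
    fderiv ℝ (tullockShare W ε φ p) y (Pi.single q a) =
      -W * φ p (y p) * fderiv ℝ (φ q) (y q) a / (∑ j, φ j (y j) + ε) ^ 2 := by
  rw [fderiv_tullockShare hφ hden, Pi.single_eq_of_ne hqp.symm,
    sum_apply_pi_single (fun j => fderiv ℝ (φ j) (y j))]
  simp only [map_zero]
  ring

theorem secondDeriv_tullockShare_pi_single [DecidableEq ι] (hφ : ∀ j, ContDiff ℝ 2 (φ j))
    (hden : ∀ y : ι → E, ∑ j, φ j (y j) + ε ≠ 0) {p q : ι} (hqp : q ≠ p) (y : ι → E) (a b : E) :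
    secondDeriv (tullockShare W ε φ p) y (Pi.single q a) (Pi.single p b) =
      -W * (∑ j, φ j (y j) + ε - 2 * φ p (y p)) / (∑ j, φ j (y j) + ε) ^ 3 *
        fderiv ℝ (φ q) (y q) a * fderiv ℝ (φ p) (y p) b := by
  set w : ι → E := Pi.single p b
  have hdiff : ∀ j, DifferentiableAt ℝ (φ j) (y j) := fun j =>
    (hφ j).differentiable two_ne_zero _
  have hwq : ∀ t : ℝ, (y + t • w) q = y q := fun t => by simp [w, Pi.single_eq_of_ne hqp]
  have hP := hasDerivAt_apply_line (hdiff p) w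
  have hB := (HasDerivAt.fun_sum fun j (_ : j ∈ Finset.univ) =>
    hasDerivAt_apply_line (hdiff j) w).add_const ε
  apply secondDeriv_eq_of_hasDerivAt (contDiff_tullockShare hφ hden p)
  simp only [fderiv_tullockShare_pi_single_of_ne hφ hden hqp, hwq]
  refine (((hP.const_mul (-W)).mul_const (fderiv ℝ (φ q) (y q) a)).fun_div (hB.fun_pow 2)
    (by simpa using pow_ne_zero 2 (hden y))).congr_deriv ?_
  simp only [w, sum_apply_pi_single (fun j => fderiv ℝ (φ j) (y j)), Pi.single_eq_same,
    zero_smul, add_zero]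
  field_simp [hden y]
  ring

theorem secondDeriv_tullockShare_pi_single_swap [DecidableEq ι] (hφ : ∀ j, ContDiff ℝ 2 (φ j))
    (hden : ∀ y : ι → E, ∑ j, φ j (y j) + ε ≠ 0) {p q : ι} (hqp : q ≠ p) (y : ι → E) (a b : E) :
    secondDeriv (tullockShare W ε φ p) y (Pi.single p a) (Pi.single q b) =
      -W * (∑ j, φ j (y j) + ε - 2 * φ p (y p)) / (∑ j, φ j (y j) + ε) ^ 3 *
        fderiv ℝ (φ p) (y p) a * fderiv ℝ (φ q) (y q) b := by
  rw [secondDeriv_comm (contDiff_tullockShare hφ hden p),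
    secondDeriv_tullockShare_pi_single hφ hden hqp]
  ring

end Tullock

section Stages

variable {N K m : ℕ}

def stageProj (k : Fin K) : (Fin N → Fin K → Fin m → ℝ) →L[ℝ] (Fin N → Fin m → ℝ) :=
  ContinuousLinearMap.pi fun j =>
    (ContinuousLinearMap.proj (φ := fun _ : Fin K => Fin m → ℝ) k).comp
      (ContinuousLinearMap.proj (φ := fun _ : Fin N => Fin K → Fin m → ℝ) j)

theorem stageProj_eJ (j : Fin N) (k l : Fin K) (a : Fin m) :
    stageProj k (eJ N K m j l a) = (Pi.single l (eS N m j a) : Fin K → Fin N → Fin m → ℝ) k := by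
  ext i b
  rcases eq_or_ne i j with rfl | hij <;> rcases eq_or_ne k l with rfl | hkl <;>
    simp [stageProj, eJ, eS, *]

theorem secondDeriv_sum_stageProj_eJ (F : Fin K → (Fin N → Fin m → ℝ) → ℝ)
    (hF : ∀ k, ContDiff ℝ 2 (F k)) (x : Fin N → Fin K → Fin m → ℝ) (i j : Fin N) (k l : Fin K)
    (a b : Fin m) :
    secondDeriv (fun x => ∑ k, F k (stageProj k x)) x (eJ N K m i k a) (eJ N K m j l b) =
      if k = l then secondDeriv (F k) (stageProj k x) (eS N m i a) (eS N m j b) else 0 := by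
  rw [secondDeriv_sum (f := fun k y => F k (stageProj k y)) _
      fun k _ => (hF k).comp (stageProj k).contDiff,
    Finset.sum_eq_single k (fun k' _ hk' => by
      simp [secondDeriv_comp_continuousLinearMap (hF k'), stageProj_eJ, Pi.single_eq_of_ne hk'])
      (by simp)]
  rw [secondDeriv_comp_continuousLinearMap (hF k), stageProj_eJ, stageProj_eJ]
  split_ifs with hkl
  · subst hkl; simp
  · simp [Pi.single_eq_of_ne hkl]

end Stages

theorem stmt8_general (K m N : ℕ)
    (p q : Fin N) (hpq : p ≠ q)
    (W ε : Fin K → ℝ) (hε : ∀ k, 0 < ε k)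
    (φ : Fin N → Fin K → (Fin m → ℝ) → ℝ)
    (hφ : ∀ j k, ContDiff ℝ 2 (φ j k)) (hφ0 : ∀ j k xjk, 0 ≤ φ j k xjk)
    (c : Fin K → (Fin N → Fin m → ℝ) → ℝ) (hc : ∀ k, ContDiff ℝ 2 (c k)) :
    -- the player `p` total profit
    let u : (Fin N → Fin K → Fin m → ℝ) → ℝ := fun x =>
      ∑ k, (W k * φ p k (x p k) / (∑ j, φ j k (x j k) + ε k) -
        c k (fun j => x j k))
    -- `∂²u_p/∂x_p∂x_q`: rows from `∇_{x_q} u_p`, columns differentiated w.r.t. `x_p`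
    ((∀ x : Fin N → Fin K → Fin m → ℝ,
        (Matrix.of fun (ka : Fin K × Fin m) (lb : Fin K × Fin m) =>
          secondDeriv u x (eJ N K m q ka.1 ka.2) (eJ N K m p lb.1 lb.2)) =
        -- `∂²u_p/∂x_q∂x_p`: rows from `∇_{x_p} u_p`, columns differentiated w.r.t. `x_q`
        (Matrix.of fun (ka : Fin K × Fin m) (lb : Fin K × Fin m) =>
          secondDeriv u x (eJ N K m p ka.1 ka.2) (eJ N K m q lb.1 lb.2)))
      ↔
      (∀ (x : Fin N → Fin K → Fin m → ℝ) (k : Fin K),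
        (Matrix.of fun a b =>
          (-(W k) * ((∑ j, φ j k (x j k)) + ε k - 2 * φ p k (x p k)) /
              ((∑ j, φ j k (x j k)) + ε k) ^ 3) *
            gradVec (φ q k) (x q k) a * gradVec (φ p k) (x p k) b -
          secondDeriv (c k) (fun j => x j k) (eS N m q a) (eS N m p b)) =
        (Matrix.of fun a b =>
          (-(W k) * ((∑ j, φ j k (x j k)) + ε k - 2 * φ p k (x p k)) /
              ((∑ j, φ j k (x j k)) + ε k) ^ 3) *
            gradVec (φ p k) (x p k) a * gradVec (φ q k) (x q k) b -
          secondDeriv (c k) (fun j => x j k) (eS N m p a) (eS N m q b)))) := by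
  intro u
  have hden : ∀ k (y : Fin N → Fin m → ℝ), ∑ j, φ j k (y j) + ε k ≠ 0 := fun k y =>
    (add_pos_of_nonneg_of_pos (Finset.sum_nonneg fun j _ => hφ0 j k _) (hε k)).ne'
  have hT : ∀ k, ContDiff ℝ 2 (tullockShare (W k) (ε k) (fun j => φ j k) p) := fun k =>
    contDiff_tullockShare (fun j => hφ j k) (hden k) p
  have hblock : ∀ x i j k l a b, secondDeriv u x (eJ N K m i k a) (eJ N K m j l b) =
      if k = l then
        secondDeriv (fun y => tullockShare (W k) (ε k) (fun j => φ j k) p y - c k y)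
          (fun j => x j k) (eS N m i a) (eS N m j b)
      else 0 :=
    secondDeriv_sum_stageProj_eJ _ fun k => (hT k).sub (hc k)
  have hsub := fun k => secondDeriv_sub (hT k) (hc k)
  have hqp := fun k =>
    secondDeriv_tullockShare_pi_single (W := W k) (fun j => hφ j k) (hden k) hpq.symm
  have hpq' := fun k =>
    secondDeriv_tullockShare_pi_single_swap (W := W k) (fun j => hφ j k) (hden k) hpq.symm
  simp only [← Matrix.ext_iff, of_apply, Prod.forall, hblock, hsub, eS, gradVec, hqp, hpq']
  refine forall_congr' fun x => ⟨fun h k a b => by simpa using h k a k b, fun h k a l b => ?_⟩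
  split_ifs with hkl
  · subst hkl
    exact h k a b
  · rfl

/-- Lemma 4 (commutativity): for the lossy Tullock profit
`u_p(x) = Σ_k [W_k φ_{p,k}(x_{p,k})/(Σ_j φ_{j,k}(x_{j,k}) + ε_k) − c_{p,k}(x_{·,k})]`,
the mixed second-derivative blocks `∂²u_p/∂x_p∂x_q` and `∂²u_p/∂x_q∂x_p` coincide
iff the stage-wise condition with `f₃ = −W_k (Φ_k + ε_k − 2φ_{p,k})/(Φ_k + ε_k)³`
holds for every stage `k` and every `x`. -/
theorem stmt8 (K m N : ℕ) (hK : 1 ≤ K) (hm : 1 ≤ m) (hN : 2 ≤ N)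
    (p q : Fin N) (hpq : p ≠ q)
    (W ε : Fin K → ℝ) (hW : ∀ k, 0 < W k) (hε : ∀ k, 0 < ε k)
    (φ : Fin N → Fin K → (Fin m → ℝ) → ℝ)
    (hφ : ∀ j k, ContDiff ℝ 2 (φ j k)) (hφ0 : ∀ j k xjk, 0 ≤ φ j k xjk)
    (c : Fin K → (Fin N → Fin m → ℝ) → ℝ) (hc : ∀ k, ContDiff ℝ 2 (c k)) :
    -- the player `p` total profit
    let u : (Fin N → Fin K → Fin m → ℝ) → ℝ := fun x =>
      ∑ k, (W k * φ p k (x p k) / (∑ j, φ j k (x j k) + ε k) -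
        c k (fun j => x j k))
    -- `∂²u_p/∂x_p∂x_q`: rows from `∇_{x_q} u_p`, columns differentiated w.r.t. `x_p`
    ((∀ x : Fin N → Fin K → Fin m → ℝ,
        (Matrix.of fun (ka : Fin K × Fin m) (lb : Fin K × Fin m) =>
          secondDeriv u x (eJ N K m q ka.1 ka.2) (eJ N K m p lb.1 lb.2)) =
        -- `∂²u_p/∂x_q∂x_p`: rows from `∇_{x_p} u_p`, columns differentiated w.r.t. `x_q`
        (Matrix.of fun (ka : Fin K × Fin m) (lb : Fin K × Fin m) =>
          secondDeriv u x (eJ N K m p ka.1 ka.2) (eJ N K m q lb.1 lb.2)))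
      ↔
      (∀ (x : Fin N → Fin K → Fin m → ℝ) (k : Fin K),
        (Matrix.of fun a b =>
          (-(W k) * ((∑ j, φ j k (x j k)) + ε k - 2 * φ p k (x p k)) /
              ((∑ j, φ j k (x j k)) + ε k) ^ 3) *
            gradVec (φ q k) (x q k) a * gradVec (φ p k) (x p k) b -
          secondDeriv (c k) (fun j => x j k) (eS N m q a) (eS N m p b)) =
        (Matrix.of fun a b =>
          (-(W k) * ((∑ j, φ j k (x j k)) + ε k - 2 * φ p k (x p k)) /
              ((∑ j, φ j k (x j k)) + ε k) ^ 3) *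
            gradVec (φ p k) (x p k) a * gradVec (φ q k) (x q k) b -
          secondDeriv (c k) (fun j => x j k) (eS N m p a) (eS N m q b)))) :=
  stmt8_general K m N p q hpq W ε hε φ hφ hφ0 c hc

end
end

section
/- Fix integers K ≥ 1, N ≥ 1, m ≥ 1. Let w ∈ ℝ^m have nonnegative entries with w ≠ 0; for each k ∈ {0,…,K−1} let W_k > 0, ε_k > 0, α_k > 0 and r_k ∈ ℝ^m. For each player i ∈ {1,…,N}, let X_i ⊆ ((ℝ_{≥0})^m)^K be nonempty, compact and convex. Define player i's payoff by u_i(x) = Σ_{k=0}^{K−1} [ W_k·(wᵀx_{i,k})/(Σ_{j=1}^N wᵀx_{j,k} + ε_k) − x_{i,k}ᵀ(α_k·Σ_{j=1}^N x_{j,k} + r_k) ]. Then the game with strategy sets X_i and payoffs u_i admits exactly one Nash equilibrium. -/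
/-!
Player `i`'s payoff is concave in its own strategy, with supergradient the pseudo-gradient
`g(x)_{i,k,a} = W_k w_a (S_k - φ_{i,k}) / S_k² - (α_k (x_{i,k,a} + Σ_j x_{j,k,a}) + r_{k,a})`,
where `φ_{i,k} = wᵀx_{i,k}` and `S_k = Σ_j φ_{j,k} + ε_k`. By the first-order conditions on the
convex strategy sets, the Nash equilibria are therefore exactly the profiles `x` with
`⟪g(x), y - x⟫ ≤ 0` for every profile `y`. The Tullock part of `-g` is monotone (an algebraic
identity in the shares), and the demand-dependent price makes `-g` strongly monotone with
constant `min_k α_k`; `g` is smooth, hence Lipschitz on the compact set of profiles. Such a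
variational inequality has exactly one solution (Stampacchia): a projected gradient step is a
contraction.
-/

open Finset Function
open scoped InnerProductSpace NNReal

section VariationalInequality

variable {E : Type*} [NormedAddCommGroup E] [InnerProductSpace ℝ E]

theorem exists_inner_sub_nonpos_of_convex {s : Set E} (hne : s.Nonempty) (hs : IsComplete s)
    (hconv : Convex ℝ s) (u : E) : ∃ v ∈ s, ∀ z ∈ s, ⟪u - v, z - v⟫_ℝ ≤ 0 := by
  obtain ⟨v, hv, hmin⟩ := exists_norm_eq_iInf_of_complete_convex hne hs hconv u
  exact ⟨v, hv, (norm_eq_iInf_iff_real_inner_le_zero hconv hv).1 hmin⟩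

/-- The metric projection onto a convex set is nonexpansive. -/
theorem norm_sub_le_of_inner_sub_nonpos {u u' p p' : E} (h : ⟪u - p, p' - p⟫_ℝ ≤ 0)
    (h' : ⟪u' - p', p - p'⟫_ℝ ≤ 0) : ‖p - p'‖ ≤ ‖u - u'‖ := by
  have hsplit : ⟪u - u', p - p'⟫_ℝ - ‖p - p'‖ ^ 2 = -⟪u - p, p' - p⟫_ℝ - ⟪u' - p', p - p'⟫_ℝ := by
    rw [← real_inner_self_eq_norm_sq]
    simp only [inner_sub_left, inner_sub_right, real_inner_comm]
    ring
  have hsq : ‖p - p'‖ ^ 2 ≤ ‖u - u'‖ * ‖p - p'‖ :=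
    (show ‖p - p'‖ ^ 2 ≤ ⟪u - u', p - p'⟫_ℝ by linarith).trans (real_inner_le_norm _ _)
  nlinarith [norm_nonneg (p - p'), norm_nonneg (u - u')]

theorem norm_sub_smul_sq_le {d e : E} {μ M : ℝ} (hμ : 0 ≤ μ) (hM : 0 < M)
    (he : ‖e‖ ≤ M * ‖d‖) (hde : μ * ‖d‖ ^ 2 ≤ ⟪e, d⟫_ℝ) :
    ‖d - (μ / M ^ 2) • e‖ ^ 2 ≤ (1 - μ ^ 2 / M ^ 2) * ‖d‖ ^ 2 := by
  have hρ : 0 ≤ μ / M ^ 2 := by positivity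
  have he2 : ‖e‖ ^ 2 ≤ M ^ 2 * ‖d‖ ^ 2 := by
    rw [← mul_pow]; exact pow_le_pow_left₀ (norm_nonneg e) he 2
  rw [norm_sub_sq_real, norm_smul, inner_smul_right, real_inner_comm, Real.norm_of_nonneg hρ]
  have key : (μ / M ^ 2) ^ 2 * ‖e‖ ^ 2 ≤ μ / M ^ 2 * μ * ‖d‖ ^ 2 := by
    calc (μ / M ^ 2) ^ 2 * ‖e‖ ^ 2 ≤ (μ / M ^ 2) ^ 2 * (M ^ 2 * ‖d‖ ^ 2) := by gcongr
      _ = μ / M ^ 2 * μ * ‖d‖ ^ 2 := by field_simp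
  have : μ / M ^ 2 * (μ * ‖d‖ ^ 2) ≤ μ / M ^ 2 * ⟪e, d⟫_ℝ := mul_le_mul_of_nonneg_left hde hρ
  have hμM : μ ^ 2 / M ^ 2 = μ / M ^ 2 * μ := by ring
  rw [mul_pow, hμM]
  nlinarith

theorem existsUnique_inner_nonneg_of_stronglyMonotone {s : Set E} (hne : s.Nonempty)
    (hs : IsComplete s) (hconv : Convex ℝ s) {G : E → E} {L : ℝ≥0} (hG : LipschitzOnWith L G s)
    {μ : ℝ} (hμ : 0 < μ) (hmono : ∀ x ∈ s, ∀ y ∈ s, μ * ‖x - y‖ ^ 2 ≤ ⟪G x - G y, x - y⟫_ℝ) :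
    ∃! x, x ∈ s ∧ ∀ y ∈ s, 0 ≤ ⟪G x, y - x⟫_ℝ := by
  choose proj hproj_mem hproj using exists_inner_sub_nonpos_of_convex hne hs hconv
  set M : ℝ := L + μ
  have hM : 0 < M := by positivity
  set c : ℝ := 1 - μ ^ 2 / M ^ 2
  have hc0 : 0 ≤ c := by
    rw [sub_nonneg, div_le_one (by positivity)]
    exact pow_le_pow_left₀ hμ.le (le_add_of_nonneg_left L.2) 2
  have hc1 : √c < 1 :=
    (Real.sqrt_lt' one_pos).2 (by rw [one_pow]; exact sub_lt_self _ (by positivity))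
  -- the projected gradient step; its fixed point solves the variational inequality
  let T : s → s := fun x => ⟨proj (x - (μ / M ^ 2) • G x), hproj_mem _⟩
  have hT : ContractingWith ⟨√c, Real.sqrt_nonneg c⟩ T := by
    refine ⟨hc1, LipschitzWith.of_dist_le_mul fun x y => ?_⟩
    have hGxy : ‖G x - G y‖ ≤ M * ‖(x : E) - y‖ := by
      rw [← dist_eq_norm, ← dist_eq_norm]
      exact (hG.dist_le_mul x x.2 y y.2).trans
        (mul_le_mul_of_nonneg_right (le_add_of_nonneg_right hμ.le) dist_nonneg)
    calc dist (T x) (T y) ≤ ‖(x - (μ / M ^ 2) • G x) - (y - (μ / M ^ 2) • G y)‖ := by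
          rw [Subtype.dist_eq, dist_eq_norm]
          exact norm_sub_le_of_inner_sub_nonpos (hproj _ _ (hproj_mem _))
            (hproj _ _ (hproj_mem _))
      _ = ‖((x : E) - y) - (μ / M ^ 2) • (G x - G y)‖ := by rw [smul_sub]; abel_nf
      _ ≤ √c * ‖(x : E) - y‖ := by
          rw [← Real.sqrt_sq (norm_nonneg _), ← Real.sqrt_sq (norm_nonneg ((x : E) - y)),
            ← Real.sqrt_mul hc0]
          exact Real.sqrt_le_sqrt (norm_sub_smul_sq_le hμ.le hM hGxy (hmono x x.2 y y.2))
      _ = _ := by rw [Subtype.dist_eq, dist_eq_norm]; rfl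
  have := hs.completeSpace_coe
  obtain ⟨x₀, hx₀⟩ := hne
  obtain ⟨x, hx, -⟩ := hT.exists_fixedPoint ⟨x₀, hx₀⟩ (edist_ne_top _ _)
  have hvi : ∀ y ∈ s, 0 ≤ ⟪G x, y - x⟫_ℝ := fun y hy => by
    have h := hproj (x - (μ / M ^ 2) • G x) y hy
    rw [show proj (x - (μ / M ^ 2) • G x) = x from congrArg Subtype.val hx, sub_sub_cancel_left,
      inner_neg_left, real_inner_smul_left, neg_nonpos] at h
    exact nonneg_of_mul_nonneg_right h (by positivity)
  refine ⟨x, ⟨x.2, hvi⟩, fun x' ⟨hx', hvi'⟩ => ?_⟩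
  have hsum : ⟪G x' - G x, x' - x⟫_ℝ = -⟪G x', x - x'⟫_ℝ - ⟪G x, x' - x⟫_ℝ := by
    simp only [inner_sub_left, inner_sub_right]
    ring
  have hle : μ * ‖x' - x‖ ^ 2 ≤ 0 := by
    linarith [hmono x' hx' x x.2, hvi x' hx', hvi' x x.2]
  exact sub_eq_zero.1 <| norm_eq_zero.1 <|
    (sq_nonpos_iff _).1 (nonpos_of_mul_nonpos_right hle hμ)

end VariationalInequality

section EuclideanSpace

variable {ι κ ν : Type*} [Fintype ι] [Fintype κ] [Fintype ν]

noncomputable def toEuclideanSpace : (ι → κ → ν → ℝ) ≃L[ℝ] EuclideanSpace ℝ (ι × κ × ν) :=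
  LinearEquiv.toContinuousLinearEquiv
    { toFun := fun x => WithLp.toLp 2 fun p => x p.1 p.2.1 p.2.2
      invFun := fun z i k a => z (i, k, a)
      map_add' := fun _ _ => rfl
      map_smul' := fun _ _ => rfl
      left_inv := fun _ => rfl
      right_inv := fun _ => rfl }

theorem inner_toEuclideanSpace (x y : ι → κ → ν → ℝ) :
    ⟪toEuclideanSpace x, toEuclideanSpace y⟫_ℝ = ∑ i, ∑ k, x i k ⬝ᵥ y i k := by
  rw [real_inner_comm]
  simp only [PiLp.inner_apply, Fintype.sum_prod_type, dotProduct, RCLike.inner_apply,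
    conj_trivial]
  rfl

end EuclideanSpace

def IsNashEquilibrium {ι S : Type*} [DecidableEq ι] (X : ι → Set S) (u : ι → (ι → S) → ℝ)
    (x : ι → S) : Prop :=
  (∀ i, x i ∈ X i) ∧ ∀ i, ∀ y ∈ X i, u i (update x i y) ≤ u i x

theorem nonpos_of_le_sub_mul {f δ : ℝ → ℝ} (hδ : ContinuousWithinAt δ (Set.Ioi 0) 0)
    (hmax : ∀ t ∈ Set.Ioc (0 : ℝ) 1, f t ≤ f 0)
    (htangent : ∀ t ∈ Set.Ioc (0 : ℝ) 1, f 0 ≤ f t - t * δ t) : δ 0 ≤ 0 := by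
  refine le_of_tendsto hδ.tendsto
    (Filter.mem_of_superset (Ioc_mem_nhdsGT one_pos) fun t ht => ?_)
  have := (htangent t ht).trans (sub_le_sub_right (hmax t ht) _)
  exact nonpos_of_mul_nonpos_right (by linarith) ht.1

theorem Finset.sum_apply_update {ι S M : Type*} [Fintype ι] [DecidableEq ι] [AddCommGroup M]
    (g : S → M) (x : ι → S) (i : ι) (p : S) :
    ∑ j, g (update x i p j) = g p - g (x i) + ∑ j, g (x j) := by
  rw [sum_congr rfl fun j _ => apply_update (fun _ => g) x i p j,
    sum_update_of_mem (mem_univ i),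
    sum_eq_add_sum_sdiff_singleton_of_mem (mem_univ i) fun j => g (x j)]
  abel

theorem div_add_const_le_tangent {φ ψ B : ℝ} (hB : 0 ≤ B) (hφ : 0 < φ + B) (hψ : 0 < ψ + B) :
    ψ / (ψ + B) ≤ φ / (φ + B) + B / (φ + B) ^ 2 * (ψ - φ) := by
  have key : φ / (φ + B) + B / (φ + B) ^ 2 * (ψ - φ) - ψ / (ψ + B)
      = B * (ψ - φ) ^ 2 / ((φ + B) ^ 2 * (ψ + B)) := by
    field_simp
    ring
  have : 0 ≤ B * (ψ - φ) ^ 2 / ((φ + B) ^ 2 * (ψ + B)) := by positivity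
  linarith

theorem sum_dotProduct_self_le_sum_add_sum_mul {ι ν : Type*} [Fintype ι] [Fintype ν]
    (d : ι → ν → ℝ) : ∑ i, d i ⬝ᵥ d i ≤ ∑ i, ∑ a, (d i a + ∑ j, d j a) * d i a := by
  have hcol : ∑ i, ∑ a, (∑ j, d j a) * d i a = ∑ a, (∑ j, d j a) ^ 2 := by
    rw [sum_comm]
    simp only [sq, mul_sum]
  simp only [add_mul, sum_add_distrib, hcol, dotProduct]
  exact le_add_of_nonneg_right (sum_nonneg fun a _ => sq_nonneg _)

namespace LossyTullock

variable {ι κ ν : Type*} [Fintype ι] [Fintype ν]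

/-- The derivative of the Tullock share `s i / (∑ j, s j + ε)` in `s i`. -/
noncomputable def tullockGrad (ε : ℝ) (s : ι → ℝ) (i : ι) : ℝ :=
  (∑ j, s j + ε - s i) / (∑ j, s j + ε) ^ 2

theorem share_deviation_le {ε : ℝ} (hε : 0 < ε) {s : ι → ℝ} (hs : 0 ≤ s) (i : ι) {σ : ℝ}
    (hσ : 0 ≤ σ) :
    σ / (σ - s i + ∑ j, s j + ε) ≤ s i / (∑ j, s j + ε) + tullockGrad ε s i * (σ - s i) := by
  have hsi : s i ≤ ∑ j, s j := single_le_sum (fun j _ => hs j) (mem_univ i)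
  have hsi₀ : 0 ≤ s i := hs i
  have h := div_add_const_le_tangent (φ := s i) (ψ := σ) (B := ∑ j, s j + ε - s i) (by linarith)
    (by linarith) (by linarith)
  rwa [add_sub_cancel, ← add_sub_assoc, add_sub_right_comm σ, ← add_assoc] at h

theorem sum_tullockGrad_sub_mul_sub_nonpos {ε : ℝ} (hε : 0 < ε) {s t : ι → ℝ} (hs : 0 ≤ s)
    (ht : 0 ≤ t) : ∑ i, (tullockGrad ε s i - tullockGrad ε t i) * (s i - t i) ≤ 0 := by
  have hA : 0 ≤ ∑ j, s j := sum_nonneg fun j _ => hs j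
  have hB : 0 ≤ ∑ j, t j := sum_nonneg fun j _ => ht j
  set E := ∑ j, s j + ε
  set F := ∑ j, t j + ε
  have hE : 0 < E := by positivity
  have hF : 0 < F := by positivity
  have hst : ∑ i, s i * t i ≤ E * F :=
    calc ∑ i, s i * t i ≤ ∑ i, s i * ∑ j, t j :=
          sum_le_sum fun i _ => mul_le_mul_of_nonneg_left
            (single_le_sum (fun j _ => ht j) (mem_univ i)) (hs i)
      _ = (∑ j, s j) * ∑ j, t j := by rw [sum_mul]
      _ ≤ E * F := by gcongr <;> linarith
  have hterm : ∀ i, (tullockGrad ε s i - tullockGrad ε t i) * (s i - t i)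
      = (E * F * (F - E) * (s i - t i) + (E - F) ^ 2 * (s i * t i) - (F * s i - E * t i) ^ 2)
        / (E ^ 2 * F ^ 2) := fun i => by
    unfold tullockGrad
    field_simp
    ring
  rw [sum_congr rfl fun i _ => hterm i, ← sum_div]
  refine div_nonpos_of_nonpos_of_nonneg ?_ (by positivity)
  rw [sum_sub_distrib, sum_add_distrib, ← mul_sum, ← mul_sum, sum_sub_distrib,
    show ∑ i, s i - ∑ i, t i = E - F by ring]
  nlinarith [mul_nonneg (sq_nonneg (E - F)) (sub_nonneg.2 hst),
    sum_nonneg fun i (_ : i ∈ univ) => sq_nonneg (F * s i - E * t i)]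

variable (w : ν → ℝ) (W ε α : κ → ℝ) (r : κ → ν → ℝ)

noncomputable def payoff [Fintype κ] (i : ι) (x : ι → κ → ν → ℝ) : ℝ :=
  ∑ k, (W k * (w ⬝ᵥ x i k) / (∑ j, w ⬝ᵥ x j k + ε k) -
    ∑ a, x i k a * (α k * ∑ j, x j k a + r k a))

noncomputable def pseudoGrad (x : ι → κ → ν → ℝ) : ι → κ → ν → ℝ := fun i k a =>
  W k * w a * tullockGrad (ε k) (fun j => w ⬝ᵥ x j k) i -
    (α k * (x i k a + ∑ j, x j k a) + r k a)

theorem pseudoGrad_dotProduct (x : ι → κ → ν → ℝ) (i : ι) (k : κ) (v : ν → ℝ) :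
    pseudoGrad w W ε α r x i k ⬝ᵥ v =
      W k * tullockGrad (ε k) (fun j => w ⬝ᵥ x j k) i * (w ⬝ᵥ v) -
      ∑ a, (α k * (x i k a + ∑ j, x j k a) + r k a) * v a := by
  simp only [pseudoGrad, dotProduct, sub_mul, sum_sub_distrib, mul_sum]
  congr 1
  exact sum_congr rfl fun a _ => by ring

variable {w W ε α}

theorem payoff_update_le [Fintype κ] [DecidableEq ι] (hw : 0 ≤ w) (hW : 0 ≤ W)
    (hε : ∀ k, 0 < ε k) (hα : 0 ≤ α)
    {x : ι → κ → ν → ℝ} (hx : 0 ≤ x) (i : ι) {p : κ → ν → ℝ} (hp : 0 ≤ p) :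
    payoff w W ε α r i (update x i p) ≤
      payoff w W ε α r i x + ∑ k, pseudoGrad w W ε α r x i k ⬝ᵥ (p k - x i k) := by
  unfold payoff
  rw [← sum_add_distrib]
  refine sum_le_sum fun k _ => ?_
  have hshare : ∑ j, w ⬝ᵥ update x i p j k = w ⬝ᵥ p k - w ⬝ᵥ x i k + ∑ j, w ⬝ᵥ x j k :=
    sum_apply_update (fun q => w ⬝ᵥ q k) x i p
  have hcol : ∀ a, ∑ j, update x i p j k a = p k a - x i k a + ∑ j, x j k a :=
    fun a => sum_apply_update (fun q => q k a) x i p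
  have htullock := share_deviation_le (hε k) (s := fun j => w ⬝ᵥ x j k)
    (fun j => dotProduct_nonneg_of_nonneg hw (hx j k)) i (dotProduct_nonneg_of_nonneg hw (hp k))
  have hcost : ∑ a, x i k a * (α k * ∑ j, x j k a + r k a) +
        ∑ a, (α k * (x i k a + ∑ j, x j k a) + r k a) * (p k a - x i k a) ≤
      ∑ a, p k a * (α k * (p k a - x i k a + ∑ j, x j k a) + r k a) := by
    rw [← sum_add_distrib]
    gcongr with a
    nlinarith [mul_nonneg (hα k) (sq_nonneg (p k a - x i k a))]
  simp only [update_self]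
  rw [hshare, pseudoGrad_dotProduct, dotProduct_sub, mul_div_assoc, mul_div_assoc]
  simp only [hcol, Pi.sub_apply]
  nlinarith [mul_le_mul_of_nonneg_left htullock (hW k)]

theorem pseudoGrad_strongly_antitone [Fintype κ] (hw : 0 ≤ w) (hW : 0 ≤ W)
    (hε : ∀ k, 0 < ε k) {μ : ℝ} (hμ : 0 ≤ μ) (hμα : ∀ k, μ ≤ α k) {x y : ι → κ → ν → ℝ}
    (hx : 0 ≤ x) (hy : 0 ≤ y) :
    μ * ∑ i, ∑ k, (x i k - y i k) ⬝ᵥ (x i k - y i k) ≤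
      ∑ i, ∑ k, (pseudoGrad w W ε α r y i k - pseudoGrad w W ε α r x i k) ⬝ᵥ (x i k - y i k) := by
  conv_lhs => rw [sum_comm, mul_sum]
  conv_rhs => rw [sum_comm]
  refine sum_le_sum fun k _ => ?_
  set d : ι → ν → ℝ := fun i => x i k - y i k
  have hsplit : ∀ i, (pseudoGrad w W ε α r y i k - pseudoGrad w W ε α r x i k) ⬝ᵥ d i =
      α k * ∑ a, (d i a + ∑ j, d j a) * d i a -
      W k * ((tullockGrad (ε k) (fun j => w ⬝ᵥ x j k) i -
        tullockGrad (ε k) (fun j => w ⬝ᵥ y j k) i) * (w ⬝ᵥ x i k - w ⬝ᵥ y i k)) := fun i => by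
    rw [sub_dotProduct, pseudoGrad_dotProduct, pseudoGrad_dotProduct, dotProduct_sub, mul_sum]
    simp only [d, Pi.sub_apply, sum_sub_distrib]
    rw [show ∀ a b c e : ℝ, a - b - (c - e) = (e - b) - (c - a) from fun _ _ _ _ => by ring,
      ← sum_sub_distrib]
    congr 1
    · exact sum_congr rfl fun a _ => by ring
    · ring
  have htullock := sum_tullockGrad_sub_mul_sub_nonpos (hε k) (s := fun j => w ⬝ᵥ x j k)
    (t := fun j => w ⬝ᵥ y j k) (fun j => dotProduct_nonneg_of_nonneg hw (hx j k))
    (fun j => dotProduct_nonneg_of_nonneg hw (hy j k))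
  have hcost := sum_dotProduct_self_le_sum_add_sum_mul d
  rw [sum_congr rfl fun i _ => hsplit i, sum_sub_distrib, ← mul_sum, ← mul_sum]
  show μ * ∑ i, d i ⬝ᵥ d i ≤ _
  have hdd : 0 ≤ ∑ i, d i ⬝ᵥ d i :=
    sum_nonneg fun i _ => sum_nonneg fun a _ => mul_self_nonneg (d i a)
  nlinarith [mul_nonpos_of_nonneg_of_nonpos (hW k) htullock,
    mul_le_mul_of_nonneg_left hcost (hμ.trans (hμα k)), mul_le_mul_of_nonneg_right (hμα k) hdd]

theorem sum_dotProduct_add_pos (hw : 0 ≤ w) (hε : ∀ k, 0 < ε k) {x : ι → κ → ν → ℝ}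
    (hx : 0 ≤ x) (k : κ) :
    0 < ∑ j, w ⬝ᵥ x j k + ε k :=
  add_pos_of_nonneg_of_pos (sum_nonneg fun j _ => dotProduct_nonneg_of_nonneg hw (hx j k)) (hε k)

theorem contDiffAt_pseudoGrad [Fintype κ] {x : ι → κ → ν → ℝ}
    (hx : ∀ k, ∑ j, w ⬝ᵥ x j k + ε k ≠ 0) {n : WithTop ℕ∞} :
    ContDiffAt ℝ n (pseudoGrad w W ε α r) x := by
  refine contDiffAt_pi.2 fun i => contDiffAt_pi.2 fun k => contDiffAt_pi.2 fun a => ?_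
  have hk := hx k
  simp only [pseudoGrad, tullockGrad, dotProduct] at hk ⊢
  fun_prop (disch := exact pow_ne_zero 2 hk)

theorem sum_pseudoGrad_dotProduct_nonpos_of_isNashEquilibrium [Fintype κ] [DecidableEq ι]
    (hw : 0 ≤ w) (hW : 0 ≤ W) (hε : ∀ k, 0 < ε k) (hα : 0 ≤ α) {X : ι → Set (κ → ν → ℝ)}
    (hX : ∀ i, ∀ p ∈ X i, 0 ≤ p) (hconv : ∀ i, Convex ℝ (X i)) {x : ι → κ → ν → ℝ}
    (hx : IsNashEquilibrium X (payoff w W ε α r) x) (i : ι) {y : κ → ν → ℝ} (hy : y ∈ X i) :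
    ∑ k, pseudoGrad w W ε α r x i k ⬝ᵥ (y k - x i k) ≤ 0 := by
  let z : ℝ → ι → κ → ν → ℝ := fun t => update x i (x i + t • (y - x i))
  have hz0 : z 0 = x := by simp [z]
  have hz : ∀ t ∈ Set.Icc (0 : ℝ) 1, ∀ j, z t j ∈ X j := fun t ht =>
    Set.mem_univ_pi.1 <| (Set.update_mem_pi_iff_of_mem (Set.mem_univ_pi.2 hx.1)).2
      fun _ => (hconv i).add_smul_sub_mem (hx.1 i) hy ht
  let δ : ℝ → ℝ := fun t => ∑ k, pseudoGrad w W ε α r (z t) i k ⬝ᵥ (y k - x i k)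
  have hδ : ContinuousAt δ 0 := by
    have hg : ContinuousAt (pseudoGrad w W ε α r) (z 0) := by
      refine (contDiffAt_pseudoGrad (n := 0) r fun k => ?_).continuousAt
      rw [hz0]
      exact (sum_dotProduct_add_pos hw hε (fun j => hX j _ (hx.1 j)) k).ne'
    have hc : ContinuousAt (fun t => pseudoGrad w W ε α r (z t)) 0 :=
      hg.comp (continuous_const.update i (by fun_prop)).continuousAt
    have hΦ : Continuous fun g : ι → κ → ν → ℝ => ∑ k, g i k ⬝ᵥ (y k - x i k) := by
      simp only [dotProduct]
      fun_prop
    exact hΦ.continuousAt.comp hc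
  have : δ 0 ≤ 0 := by
    refine nonpos_of_le_sub_mul (f := fun t => payoff w W ε α r i (z t)) hδ.continuousWithinAt
      (fun t ht => ?_) (fun t ht => ?_)
    · simpa [hz0, z] using hx.2 i _ ((hz t (Set.Ioc_subset_Icc_self ht)) i)
    · have h := payoff_update_le r hw hW hε hα
        (fun j => hX j _ (hz t (Set.Ioc_subset_Icc_self ht) j)) i (hX i _ (hx.1 i))
      have hupd : update (z t) i (x i) = x := by simp [z]
      have hdiff : ∀ k, x i k - z t i k = -t • (y k - x i k) := fun k => by
        ext a
        simp [z]
      simp only [hupd, hdiff, dotProduct_smul, smul_eq_mul, ← mul_sum] at h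
      simp only [hz0, δ]
      linarith
  simpa [δ, hz0] using this

theorem isNashEquilibrium_iff [Fintype κ] [DecidableEq ι] (hw : 0 ≤ w) (hW : 0 ≤ W)
    (hε : ∀ k, 0 < ε k) (hα : 0 ≤ α) {X : ι → Set (κ → ν → ℝ)} (hX : ∀ i, ∀ p ∈ X i, 0 ≤ p)
    (hconv : ∀ i, Convex ℝ (X i)) {x : ι → κ → ν → ℝ} :
    IsNashEquilibrium X (payoff w W ε α r) x ↔ x ∈ Set.univ.pi X ∧
      ∀ y ∈ Set.univ.pi X, ∑ i, ∑ k, pseudoGrad w W ε α r x i k ⬝ᵥ (y i k - x i k) ≤ 0 := by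
  simp only [Set.mem_univ_pi]
  refine ⟨fun hx => ⟨hx.1, fun y hy => sum_nonpos fun i _ =>
    sum_pseudoGrad_dotProduct_nonpos_of_isNashEquilibrium r hw hW hε hα hX hconv hx i (hy i)⟩,
    fun ⟨hx, hvi⟩ => ⟨hx, fun i p hp => ?_⟩⟩
  have hsingle : ∑ j, ∑ k, pseudoGrad w W ε α r x j k ⬝ᵥ (update x i p j k - x j k) =
      ∑ k, pseudoGrad w W ε α r x i k ⬝ᵥ (p k - x i k) :=
    (Fintype.sum_eq_single i fun j hj => by simp [update_of_ne hj]).trans (by simp)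
  have hupd := (Set.update_mem_pi_iff_of_mem (Set.mem_univ_pi.2 hx)).2 fun _ => hp
  have := payoff_update_le r hw hW hε hα (fun j => hX j _ (hx j)) i (hX i p hp)
  linarith [hsingle ▸ hvi _ (Set.mem_univ_pi.1 hupd)]

theorem existsUnique_forall_sum_pseudoGrad_dotProduct_nonpos [Fintype κ] (hw : 0 ≤ w)
    (hW : 0 ≤ W) (hε : ∀ k, 0 < ε k) {μ : ℝ} (hμ : 0 < μ) (hμα : ∀ k, μ ≤ α k)
    {P : Set (ι → κ → ν → ℝ)} (hne : P.Nonempty) (hcomp : IsCompact P) (hconv : Convex ℝ P)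
    (hP : ∀ x ∈ P, 0 ≤ x) :
    ∃! x, x ∈ P ∧ ∀ y ∈ P, ∑ i, ∑ k, pseudoGrad w W ε α r x i k ⬝ᵥ (y i k - x i k) ≤ 0 := by
  let e := toEuclideanSpace (ι := ι) (κ := κ) (ν := ν)
  let G := fun z => -e (pseudoGrad w W ε α r (e.symm z))
  have hG : ∀ x y, ⟪G (e x), e y - e x⟫_ℝ =
      -∑ i, ∑ k, pseudoGrad w W ε α r x i k ⬝ᵥ (y i k - x i k) := fun x y => by
    rw [← map_sub, inner_neg_left, ContinuousLinearEquiv.symm_apply_apply,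
      inner_toEuclideanSpace]
    rfl
  have hcompE : IsCompact (e '' P) := hcomp.image e.continuous
  have hconvE : Convex ℝ (e '' P) := hconv.linear_image e.toLinearEquiv.toLinearMap
  obtain ⟨L, hL⟩ : ∃ L, LipschitzOnWith L G (e '' P) := by
    refine ContDiffOn.exists_lipschitzOnWith (n := 1) ?_ one_ne_zero hconvE hcompE
    rintro _ ⟨x, hx, rfl⟩
    have hg : ContDiffAt ℝ 1 (pseudoGrad w W ε α r) (e.symm (e x)) := by
      rw [e.symm_apply_apply]
      exact contDiffAt_pseudoGrad r fun k => (sum_dotProduct_add_pos hw hε (hP x hx) k).ne'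
    exact (e.contDiff.contDiffAt.comp _ (hg.comp _ e.symm.contDiff.contDiffAt)).neg
      |>.contDiffWithinAt
  have hmono : ∀ a ∈ e '' P, ∀ b ∈ e '' P, μ * ‖a - b‖ ^ 2 ≤ ⟪G a - G b, a - b⟫_ℝ := by
    rintro _ ⟨x, hx, rfl⟩ _ ⟨y, hy, rfl⟩
    have hGsub : G (e x) - G (e y) = e (pseudoGrad w W ε α r y - pseudoGrad w W ε α r x) := by
      simp only [G, e.symm_apply_apply, map_sub]
      abel
    rw [hGsub, ← map_sub, ← real_inner_self_eq_norm_sq, inner_toEuclideanSpace,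
      inner_toEuclideanSpace]
    exact pseudoGrad_strongly_antitone r hw hW hε hμ.le hμα (hP x hx) (hP y hy)
  obtain ⟨_, ⟨⟨x, hx, rfl⟩, hvi⟩, huniq⟩ := existsUnique_inner_nonneg_of_stronglyMonotone
    (hne.image e) hcompE.isComplete hconvE hL hμ hmono
  refine ⟨x, ⟨hx, fun y hy => ?_⟩,
    fun x' ⟨hx', hvi'⟩ => e.injective (huniq _ ⟨⟨x', hx', rfl⟩, ?_⟩)⟩
  · linarith [hG x y ▸ hvi (e y) ⟨y, hy, rfl⟩]
  · rintro _ ⟨y, hy, rfl⟩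
    linarith [hG x' y, hvi' y hy]

end LossyTullock

theorem stmt9_general (K N m : ℕ)
    (w : Fin m → ℝ) (hw : ∀ a, 0 ≤ w a)
    (W ε α : Fin K → ℝ) (r : Fin K → Fin m → ℝ)
    (hW : ∀ k, 0 < W k) (hε : ∀ k, 0 < ε k) (hα : ∀ k, 0 < α k)
    (X : Fin N → Set (Fin K → Fin m → ℝ))
    (hX : ∀ i, ∀ x ∈ X i, ∀ (k : Fin K) (a : Fin m), 0 ≤ x k a)
    (hne : ∀ i, (X i).Nonempty) (hcomp : ∀ i, IsCompact (X i))
    (hconv : ∀ i, Convex ℝ (X i)) :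
    let u : Fin N → (Fin N → Fin K → Fin m → ℝ) → ℝ := fun i x =>
      ∑ k, (W k * (∑ a, w a * x i k a) /
          ((∑ j, ∑ a, w a * x j k a) + ε k) -
        ∑ a, x i k a * (α k * (∑ j, x j k a) + r k a))
    ∃! xb : Fin N → Fin K → Fin m → ℝ,
      (∀ i, xb i ∈ X i) ∧
      ∀ i : Fin N, ∀ y ∈ X i, u i (Function.update xb i y) ≤ u i xb := by
  intro u
  show ∃! x, IsNashEquilibrium X (LossyTullock.payoff w W ε α r) x
  obtain ⟨⟨μ, hμ⟩, hμα⟩ := Finite.exists_ge (α := Set.Ioi (0 : ℝ)) fun k => ⟨α k, hα k⟩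
  have hW₀ : 0 ≤ W := fun k => (hW k).le
  refine (existsUnique_congr fun x =>
    LossyTullock.isNashEquilibrium_iff r hw hW₀ hε (fun k => (hα k).le) hX hconv).2 ?_
  exact LossyTullock.existsUnique_forall_sum_pseudoGrad_dotProduct_nonpos r hw hW₀ hε hμ hμα
    (Set.univ_pi_nonempty_iff.2 hne) (isCompact_univ_pi hcomp) (convex_pi fun i _ => hconv i)
    fun x hx i => hX i _ (hx i trivial)

/-- Proposition 3: the lossy Tullock game with linear participation functions
`φ_{i,k}(x_{i,k}) = wᵀx_{i,k}` and demand-dependent participation costs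
`x_{i,k}ᵀ(α_k Σ_j x_{j,k} + r_k)` on nonempty compact convex strategy sets
contained in the nonnegative orthant admits exactly one Nash equilibrium. -/
theorem stmt9 (K N m : ℕ) (hK : 1 ≤ K) (hN : 1 ≤ N) (hm : 1 ≤ m)
    (w : Fin m → ℝ) (hw : ∀ a, 0 ≤ w a) (hw0 : w ≠ 0)
    (W ε α : Fin K → ℝ) (r : Fin K → Fin m → ℝ)
    (hW : ∀ k, 0 < W k) (hε : ∀ k, 0 < ε k) (hα : ∀ k, 0 < α k)
    (X : Fin N → Set (Fin K → Fin m → ℝ))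
    (hX : ∀ i, ∀ x ∈ X i, ∀ (k : Fin K) (a : Fin m), 0 ≤ x k a)
    (hne : ∀ i, (X i).Nonempty) (hcomp : ∀ i, IsCompact (X i))
    (hconv : ∀ i, Convex ℝ (X i)) :
    let u : Fin N → (Fin N → Fin K → Fin m → ℝ) → ℝ := fun i x =>
      ∑ k, (W k * (∑ a, w a * x i k a) /
          ((∑ j, ∑ a, w a * x j k a) + ε k) -
        ∑ a, x i k a * (α k * (∑ j, x j k a) + r k a))
    ∃! xb : Fin N → Fin K → Fin m → ℝ,
      (∀ i, xb i ∈ X i) ∧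
      ∀ i : Fin N, ∀ y ∈ X i, u i (Function.update xb i y) ≤ u i xb :=
  stmt9_general K N m w hw W ε α r hW hε hα X hX hne hcomp hconv
end

section
/- Fix integers N ≥ 1 and K ≥ 1, and parameters W_k > 0, ε_k > 0, β_k ∈ ℝ for k ∈ {0,…,K−1}, and budgets R_i > 0 for i ∈ {1,…,N}. Let X_i = {x ∈ ℝ^K : x_k ≥ 0 for all k and Σ_{k} x_k = R_i}, and define u_i(x) = Σ_{k=0}^{K−1} [ W_k·x_{i,k}/(Σ_{j=1}^N x_{j,k} + ε_k) − β_k·x_{i,k} ] for x ∈ Π_j X_j. Then this game admits exactly one Nash equilibrium. -/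
open Finset

/-!
Each player's payoff `∑ₖ (Wₖ sₖ/(sₖ + cₖ) − βₖ sₖ)` is concave in its own allocation `s`, so the
Nash equilibria are exactly the solutions of the variational inequality `⟪G x, w − x⟫ ≤ 0` on the
product of the budget simplices, where `G` is the pseudo-gradient (the players' marginal payoffs).
In each battlefield the symmetric part of the Jacobian of `G` is uniformly negative definite on
the feasible set (Cauchy–Schwarz), so `G` is strongly monotone; as `ε > 0` keeps denominators away
from zero, `G` is also Lipschitz. Strong monotonicity gives uniqueness, and for a small step `γ`
the projected gradient step `x ↦ P (x + γ G x)` is a contraction, whose fixed point is an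
equilibrium.
-/

namespace BlottoTullock

open scoped RealInnerProductSpace

section Contest

-- `c` is the total stake of the opponents plus `ε`.
noncomputable def tullock (W β c s : ℝ) : ℝ := W * s / (s + c) - β * s

noncomputable def tullockDeriv (W β c s : ℝ) : ℝ := W * c / (s + c) ^ 2 - β

theorem hasDerivAt_tullock (W β : ℝ) {c s : ℝ} (h : s + c ≠ 0) :
    HasDerivAt (tullock W β c) (tullockDeriv W β c s) s := by
  have h' : HasDerivAt (fun x => W * x / (x + c) - β * x)
      ((W * 1 * (s + c) - W * s * 1) / (s + c) ^ 2 - β * 1) s :=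
    (((hasDerivAt_id' s).const_mul W).fun_div ((hasDerivAt_id' s).add_const c) h).fun_sub
      ((hasDerivAt_id' s).const_mul β)
  refine h'.congr_deriv ?_
  simp only [tullockDeriv]
  field_simp
  ring

theorem tullock_sub_le {W c a b : ℝ} (β : ℝ) (hW : 0 ≤ W) (hc : 0 < c) (ha : 0 ≤ a) (hb : 0 ≤ b) :
    tullock W β c b - tullock W β c a ≤ (b - a) * tullockDeriv W β c a := by
  have key : tullock W β c b - tullock W β c a
      = (b - a) * tullockDeriv W β c a - W * c * (b - a) ^ 2 / ((b + c) * (a + c) ^ 2) := by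
    unfold tullock tullockDeriv
    field_simp
    ring
  rw [key, sub_le_self_iff]
  positivity

variable {κ : Type*} [Fintype κ]

theorem isMaxOn_sum_tullock_iff {W β c : κ → ℝ} {S : Set (κ → ℝ)} (hS : Convex ℝ S)
    (hS0 : ∀ x ∈ S, ∀ k, 0 ≤ x k) (hW : ∀ k, 0 ≤ W k) (hc : ∀ k, 0 < c k) {y : κ → ℝ}
    (hy : y ∈ S) :
    IsMaxOn (fun x => ∑ k, tullock (W k) (β k) (c k) (x k)) S y ↔
      ∀ w ∈ S, ∑ k, (w k - y k) * tullockDeriv (W k) (β k) (c k) (y k) ≤ 0 := by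
  constructor
  · intro hmax w hw
    have hderiv : HasFDerivAt (fun x : κ → ℝ => ∑ k, tullock (W k) (β k) (c k) (x k))
        (∑ k, tullockDeriv (W k) (β k) (c k) (y k) • ContinuousLinearMap.proj k) y :=
      HasFDerivAt.fun_sum fun k _ => by
        have hk : y k + c k ≠ 0 := by linarith [hS0 y hy k, hc k]
        exact (hasDerivAt_tullock (W k) (β k) hk).comp_hasFDerivAt y
          (hasFDerivAt_apply (𝕜 := ℝ) k y)
    have := hmax.localize.hasFDerivWithinAt_nonpos hderiv.hasFDerivWithinAt
      (sub_mem_posTangentConeAt_of_segment_subset (hS.segment_subset hy hw))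
    simpa [mul_comm] using this
  · intro hvi
    refine isMaxOn_iff.2 fun w hw => sub_nonpos.1 ?_
    calc ∑ k, tullock (W k) (β k) (c k) (w k) - ∑ k, tullock (W k) (β k) (c k) (y k)
        ≤ ∑ k, (w k - y k) * tullockDeriv (W k) (β k) (c k) (y k) := by
          rw [← sum_sub_distrib]
          exact sum_le_sum fun k _ => tullock_sub_le _ (hW k) (hc k) (hS0 y hy k) (hS0 w hw k)
      _ ≤ 0 := hvi w hw

end Contest

section ContestGrad

variable {ι : Type*} [Fintype ι]

-- `∂/∂zᵢ` of `W zᵢ / (∑ⱼ zⱼ + ε)`.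
noncomputable def contestGrad (W ε : ℝ) (z : ι → ℝ) (i : ι) : ℝ :=
  W * (∑ j, z j + ε - z i) / (∑ j, z j + ε) ^ 2

theorem two_mul_sum_mul_sum_mul_le (d z : ι → ℝ) (hz : ∀ i, 0 ≤ z i) :
    2 * (∑ i, d i) * ∑ i, d i * z i ≤ (∑ i, z i) * ((∑ i, d i) ^ 2 + ∑ i, d i ^ 2) := by
  have hS : 0 ≤ ∑ i, z i := sum_nonneg fun i _ => hz i
  have hP : 0 ≤ ∑ i, d i ^ 2 := sum_nonneg fun i _ => sq_nonneg _
  have hCS : (∑ i, d i * z i) ^ 2 ≤ (∑ i, d i ^ 2) * (∑ i, z i) ^ 2 :=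
    (sum_mul_sq_le_sq_mul_sq _ d z).trans
      (mul_le_mul_of_nonneg_left (sum_sq_le_sq_sum_of_nonneg fun i _ => hz i) hP)
  rcases hS.eq_or_lt with hS0 | hSpos
  · rw [← hS0] at hCS ⊢
    nlinarith
  · refine le_of_mul_le_mul_left ?_ hSpos
    nlinarith [sq_nonneg ((∑ i, z i) * ∑ i, d i - ∑ i, d i * z i)]

theorem sum_mul_contestGrad (W ε : ℝ) (d z : ι → ℝ) :
    ∑ i, d i * contestGrad W ε z i =
      W * ((∑ i, d i) / (∑ j, z j + ε) - (∑ i, d i * z i) / (∑ j, z j + ε) ^ 2) := by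
  by_cases hQ : ∑ j, z j + ε = 0
  · simp [contestGrad, hQ]
  have hnum : ∑ i, d i * (W * (∑ j, z j + ε - z i)) =
      W * ((∑ i, d i) * (∑ j, z j + ε) - ∑ i, d i * z i) := by
    simp only [mul_sub, sum_sub_distrib, ← sum_mul, mul_sum]
    ring_nf
  simp only [contestGrad, mul_div_assoc', ← sum_div, hnum]
  field_simp

theorem hasDerivAt_contest_line (W D P Q₀ Z₀ t : ℝ) (hQ : Q₀ + t * D ≠ 0) :
    HasDerivAt (fun s => W * (D / (Q₀ + s * D) - (Z₀ + s * P) / (Q₀ + s * D) ^ 2))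
      (W * (2 * D * (Z₀ + t * P) - (Q₀ + t * D) * (D ^ 2 + P)) / (Q₀ + t * D) ^ 3) t := by
  have hQ' : HasDerivAt (fun s => Q₀ + s * D) D t := by
    simpa using ((hasDerivAt_id' t).mul_const D).const_add Q₀
  have hZ' : HasDerivAt (fun s => Z₀ + s * P) P t := by
    simpa using ((hasDerivAt_id' t).mul_const P).const_add Z₀
  have h := (((hasDerivAt_const t D).fun_div hQ' hQ).fun_sub
    (hZ'.fun_div (hQ'.fun_pow 2) (pow_ne_zero 2 hQ))).const_mul W
  refine h.congr_deriv ?_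
  field_simp
  ring

-- The left side is `⟪d, J d⟫` for the Jacobian `J` of `contestGrad W ε` at `w`.
theorem contestGrad_directionalDeriv_le {W ε R : ℝ} (hW : 0 ≤ W) (hε : 0 < ε) {w : ι → ℝ}
    (hw : ∀ i, 0 ≤ w i) (hwR : ∑ i, w i ≤ R) (d : ι → ℝ) :
    W * (2 * (∑ i, d i) * (∑ i, d i * w i) - (∑ i, w i + ε) * ((∑ i, d i) ^ 2 + ∑ i, d i ^ 2))
        / (∑ i, w i + ε) ^ 3
      ≤ -(W * ε / (R + ε) ^ 3 * ∑ i, d i ^ 2) := by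
  have hS : 0 ≤ ∑ i, w i := sum_nonneg fun i _ => hw i
  have hP : 0 ≤ ∑ i, d i ^ 2 := sum_nonneg fun i _ => sq_nonneg _
  have hQ : 0 < ∑ i, w i + ε := by linarith
  have hnum : 2 * (∑ i, d i) * (∑ i, d i * w i) - (∑ i, w i + ε) * ((∑ i, d i) ^ 2 + ∑ i, d i ^ 2)
      ≤ -(ε * ∑ i, d i ^ 2) := by
    nlinarith [two_mul_sum_mul_sum_mul_le d w hw, sq_nonneg (∑ i, d i)]
  calc W * (2 * (∑ i, d i) * (∑ i, d i * w i) - (∑ i, w i + ε) * ((∑ i, d i) ^ 2 + ∑ i, d i ^ 2))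
        / (∑ i, w i + ε) ^ 3
      ≤ -(W * ε * ∑ i, d i ^ 2) / (∑ i, w i + ε) ^ 3 := by
        gcongr
        nlinarith
    _ ≤ -(W * ε * ∑ i, d i ^ 2) / (R + ε) ^ 3 := by
        rw [neg_div, neg_div, neg_le_neg_iff]
        gcongr
    _ = -(W * ε / (R + ε) ^ 3 * ∑ i, d i ^ 2) := by ring

theorem hasDerivAt_sum_mul_contestGrad_line (W ε : ℝ) (y d : ι → ℝ) (t : ℝ)
    (hQ : ∑ i, (y i + t * d i) + ε ≠ 0) :
    HasDerivAt (fun s => ∑ i, d i * contestGrad W ε (fun j => y j + s * d j) i)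
      (W * (2 * (∑ i, d i) * (∑ i, d i * (y i + t * d i))
          - (∑ i, (y i + t * d i) + ε) * ((∑ i, d i) ^ 2 + ∑ i, d i ^ 2))
        / (∑ i, (y i + t * d i) + ε) ^ 3) t := by
  have hQ_line : ∀ s, ∑ i, (y i + s * d i) + ε = (∑ i, y i + ε) + s * ∑ i, d i := fun s => by
    simp only [sum_add_distrib, ← mul_sum]; ring
  have hZ_line : ∀ s, ∑ i, d i * (y i + s * d i) = ∑ i, d i * y i + s * ∑ i, d i ^ 2 :=
    fun s => by
      simp only [mul_add, sum_add_distrib, mul_sum]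
      exact congrArg _ (sum_congr rfl fun i _ => by ring)
  simp only [sum_mul_contestGrad, hQ_line, hZ_line] at hQ ⊢
  exact hasDerivAt_contest_line W _ _ _ _ t hQ

theorem sub_le_of_forall_hasDerivAt_le {f f' : ℝ → ℝ} {C : ℝ}
    (hf : ∀ t ∈ Set.Icc (0 : ℝ) 1, HasDerivAt f (f' t) t)
    (hC : ∀ t ∈ Set.Icc (0 : ℝ) 1, f' t ≤ C) : f 1 - f 0 ≤ C := by
  simpa using (convex_Icc (0 : ℝ) 1).image_sub_le_mul_sub_of_deriv_le
    (fun t ht => (hf t ht).continuousAt.continuousWithinAt)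
    (fun t ht => (hf t (interior_subset ht)).differentiableAt.differentiableWithinAt)
    (fun t ht => (hf t (interior_subset ht)).deriv ▸ hC t (interior_subset ht))
    0 (by simp) 1 (by simp) zero_le_one

theorem contestGrad_strongMono {W ε R : ℝ} (hW : 0 ≤ W) (hε : 0 < ε) {x y : ι → ℝ}
    (hx : ∀ i, 0 ≤ x i) (hy : ∀ i, 0 ≤ y i) (hxR : ∑ i, x i ≤ R) (hyR : ∑ i, y i ≤ R) :
    ∑ i, (x i - y i) * (contestGrad W ε x i - contestGrad W ε y i)
      ≤ -(W * ε / (R + ε) ^ 3 * ∑ i, (x i - y i) ^ 2) := by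
  set d : ι → ℝ := fun i => x i - y i
  have hline : ∀ t ∈ Set.Icc (0 : ℝ) 1, (∀ i, 0 ≤ y i + t * d i) ∧ ∑ i, (y i + t * d i) ≤ R := by
    rintro t ⟨ht0, ht1⟩
    have hconv : ∀ i, y i + t * d i = (1 - t) * y i + t * x i := fun i => by ring
    refine ⟨fun i => ?_, ?_⟩
    · rw [hconv]; nlinarith [hx i, hy i]
    · simp only [hconv, sum_add_distrib, ← mul_sum]; nlinarith
  have hmvt := sub_le_of_forall_hasDerivAt_le
    (f := fun s => ∑ i, d i * contestGrad W ε (fun j => y j + s * d j) i)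
    (fun t ht => hasDerivAt_sum_mul_contestGrad_line W ε y d t
      (by have := sum_nonneg fun i (_ : i ∈ univ) => (hline t ht).1 i; positivity))
    (fun t ht => contestGrad_directionalDeriv_le hW hε (hline t ht).1 (hline t ht).2 d)
  have hyd : (fun j => y j + 1 * d j) = x := funext fun j => by simp [d]
  simp only [hyd, zero_mul, add_zero, ← sum_sub_distrib, ← mul_sub] at hmvt
  exact hmvt

theorem abs_div_sq_sub_div_sq_le {ε a b p q : ℝ} (hε : 0 < ε) (ha : ε ≤ a) (hb : ε ≤ b)
    (hq : 0 ≤ q) (hqb : q ≤ b) :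
    |p / a ^ 2 - q / b ^ 2| ≤ (|p - q| + 2 * |a - b|) / ε ^ 2 := by
  have ha0 : 0 < a := hε.trans_le ha
  have hb0 : 0 < b := hε.trans_le hb
  have hsplit :
      p / a ^ 2 - q / b ^ 2 = (p - q) / a ^ 2 + q * (b - a) * (b + a) / (a ^ 2 * b ^ 2) := by
    field_simp
    ring
  have h₁ : |(p - q) / a ^ 2| ≤ |p - q| / ε ^ 2 := by
    rw [abs_div, abs_of_pos (by positivity : 0 < a ^ 2)]
    gcongr
  have h₂ : |q * (b - a) * (b + a) / (a ^ 2 * b ^ 2)| ≤ 2 * |a - b| / ε ^ 2 := by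
    rw [abs_div, abs_mul, abs_mul, abs_of_nonneg hq, abs_of_pos (by positivity : 0 < b + a),
      abs_of_pos (by positivity : 0 < a ^ 2 * b ^ 2), abs_sub_comm,
      div_le_div_iff₀ (by positivity) (by positivity)]
    have hab : ε ^ 2 ≤ a * b := by nlinarith
    have haa : ε ^ 2 ≤ a ^ 2 := by nlinarith
    have hε2 : (b + a) * ε ^ 2 ≤ 2 * a ^ 2 * b := by
      nlinarith [mul_le_mul_of_nonneg_left hab ha0.le, mul_le_mul_of_nonneg_left haa hb0.le]
    calc q * |a - b| * (b + a) * ε ^ 2 ≤ b * |a - b| * ((b + a) * ε ^ 2) := by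
          rw [mul_assoc _ (b + a)]
          gcongr
      _ ≤ b * |a - b| * (2 * a ^ 2 * b) := by gcongr
      _ = 2 * |a - b| * (a ^ 2 * b ^ 2) := by ring
  rw [hsplit, add_div]
  exact (abs_add_le _ _).trans (add_le_add h₁ h₂)

theorem abs_contestGrad_sub_le {W ε : ℝ} (hW : 0 ≤ W) (hε : 0 < ε) {x y : ι → ℝ}
    (hx : ∀ i, 0 ≤ x i) (hy : ∀ i, 0 ≤ y i) (i : ι) :
    |contestGrad W ε x i - contestGrad W ε y i| ≤ 4 * W / ε ^ 2 * ∑ j, |x j - y j| := by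
  set σ := ∑ j, |x j - y j|
  set a := ∑ j, x j + ε
  set b := ∑ j, y j + ε
  have hxi : x i ≤ ∑ j, x j := single_le_sum (fun j _ => hx j) (mem_univ i)
  have hyi : y i ≤ ∑ j, y j := single_le_sum (fun j _ => hy j) (mem_univ i)
  have hab : |a - b| ≤ σ := by
    rw [show a - b = ∑ j, (x j - y j) by simp only [a, b, sum_sub_distrib]; ring]
    exact abs_sum_le_sum_abs _ _
  have hdi : |x i - y i| ≤ σ := single_le_sum (f := fun j => |x j - y j|)
    (fun j _ => abs_nonneg _) (mem_univ i)
  have hpq : |(a - x i) - (b - y i)| ≤ 2 * σ := by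
    rw [show (a - x i) - (b - y i) = (a - b) - (x i - y i) by ring]
    linarith [abs_sub (a - b) (x i - y i)]
  have hdiff := abs_div_sq_sub_div_sq_le (p := a - x i) hε (by linarith [hx i] : ε ≤ a)
    (by linarith [hy i] : ε ≤ b) (by linarith : 0 ≤ b - y i) (by linarith [hy i])
  rw [show contestGrad W ε x i - contestGrad W ε y i = W * ((a - x i) / a ^ 2 - (b - y i) / b ^ 2)
    by rw [mul_sub, ← mul_div_assoc, ← mul_div_assoc]; rfl, abs_mul, abs_of_nonneg hW]
  calc W * |(a - x i) / a ^ 2 - (b - y i) / b ^ 2| ≤ W * ((2 * σ + 2 * σ) / ε ^ 2) := by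
        gcongr
        exact hdiff.trans (by gcongr)
    _ = 4 * W / ε ^ 2 * σ := by ring

theorem sum_sq_contestGrad_sub_le {W ε : ℝ} (hW : 0 ≤ W) (hε : 0 < ε) {x y : ι → ℝ}
    (hx : ∀ i, 0 ≤ x i) (hy : ∀ i, 0 ≤ y i) :
    ∑ i, (contestGrad W ε x i - contestGrad W ε y i) ^ 2
      ≤ (Fintype.card ι * (4 * W / ε ^ 2)) ^ 2 * ∑ i, (x i - y i) ^ 2 := by
  set σ := ∑ j, |x j - y j|
  calc ∑ i, (contestGrad W ε x i - contestGrad W ε y i) ^ 2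
      ≤ ∑ _i : ι, (4 * W / ε ^ 2 * σ) ^ 2 := sum_le_sum fun i _ => by
        rw [← sq_abs]
        exact pow_le_pow_left₀ (abs_nonneg _) (abs_contestGrad_sub_le hW hε hx hy i) 2
    _ = Fintype.card ι * (4 * W / ε ^ 2) ^ 2 * σ ^ 2 := by
        rw [sum_const, card_univ, nsmul_eq_mul]; ring
    _ ≤ Fintype.card ι * (4 * W / ε ^ 2) ^ 2 * (Fintype.card ι * ∑ i, (x i - y i) ^ 2) := by
        gcongr
        simpa [sq_abs] using sq_sum_le_card_mul_sum_sq (s := univ) (f := fun j => |x j - y j|)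
    _ = (Fintype.card ι * (4 * W / ε ^ 2)) ^ 2 * ∑ i, (x i - y i) ^ 2 := by ring

end ContestGrad

section VariationalInequality

variable {E : Type*} [NormedAddCommGroup E] [InnerProductSpace ℝ E]

theorem norm_sub_le_of_inner_le_zero {a b p q : E} (hp : ⟪a - p, q - p⟫ ≤ 0)
    (hq : ⟪b - q, p - q⟫ ≤ 0) : ‖p - q‖ ≤ ‖a - b‖ := by
  have hsq : ‖p - q‖ ^ 2 ≤ ⟪a - b, p - q⟫ := by
    have hab : a - b = (a - p) - (b - q) + (p - q) := by abel
    have hqp : q - p = -(p - q) := by abel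
    rw [hab, inner_add_left, inner_sub_left, real_inner_self_eq_norm_sq]
    rw [hqp, inner_neg_right] at hp
    linarith
  have hCS := real_inner_le_norm (a - b) (p - q)
  rcases (norm_nonneg (p - q)).eq_or_lt with h0 | h0
  · rw [← h0]; exact norm_nonneg _
  · nlinarith

theorem norm_add_smul_le_of_inner_le {a b : E} {m L : ℝ} (hm : 0 < m)
    (hinner : ⟪b, a⟫ ≤ -(m * ‖a‖ ^ 2)) (hnorm : ‖b‖ ≤ L * ‖a‖) :
    ‖a + (m / (L ^ 2 + m ^ 2)) • b‖ ≤ √(L ^ 2 / (L ^ 2 + m ^ 2)) * ‖a‖ := by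
  set γ := m / (L ^ 2 + m ^ 2)
  have hγ : 0 < γ := by positivity
  have hb : ‖b‖ ^ 2 ≤ L ^ 2 * ‖a‖ ^ 2 := by
    rw [← mul_pow]; exact pow_le_pow_left₀ (norm_nonneg _) hnorm 2
  have hexact : ‖a‖ ^ 2 + 2 * (γ * -(m * ‖a‖ ^ 2)) + γ ^ 2 * (L ^ 2 * ‖a‖ ^ 2)
      = L ^ 2 / (L ^ 2 + m ^ 2) * ‖a‖ ^ 2 - m ^ 4 * ‖a‖ ^ 2 / (L ^ 2 + m ^ 2) ^ 2 := by
    have : 0 < L ^ 2 + m ^ 2 := by positivity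
    simp only [γ]; field_simp; ring
  have hsq : ‖a + γ • b‖ ^ 2 ≤ L ^ 2 / (L ^ 2 + m ^ 2) * ‖a‖ ^ 2 := by
    rw [norm_add_sq_real, real_inner_smul_right, norm_smul, Real.norm_of_nonneg hγ.le,
      real_inner_comm]
    nlinarith [mul_le_mul_of_nonneg_left hinner hγ.le, mul_le_mul_of_nonneg_left hb (sq_nonneg γ),
      div_nonneg (mul_nonneg (pow_nonneg hm.le 4) (sq_nonneg ‖a‖)) (sq_nonneg (L ^ 2 + m ^ 2))]
  rw [← Real.sqrt_sq (norm_nonneg _), ← Real.sqrt_sq (norm_nonneg a), ← Real.sqrt_mul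
    (by positivity)]
  exact Real.sqrt_le_sqrt hsq

theorem exists_forall_inner_le_zero_of_strongMono [CompleteSpace E] {X : Set E}
    (hne : X.Nonempty) (hc : IsClosed X) (hconv : Convex ℝ X) {F : E → E} {m L : ℝ} (hm : 0 < m)
    (hmono : ∀ u ∈ X, ∀ v ∈ X, ⟪F u - F v, u - v⟫ ≤ -(m * ‖u - v‖ ^ 2))
    (hlip : ∀ u ∈ X, ∀ v ∈ X, ‖F u - F v‖ ≤ L * ‖u - v‖) :
    ∃ x ∈ X, ∀ w ∈ X, ⟪F x, w - x⟫ ≤ 0 := by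
  have hproj : ∀ a, ∃ p ∈ X, ∀ w ∈ X, ⟪a - p, w - p⟫ ≤ 0 := fun a => by
    obtain ⟨p, hp, hmin⟩ := exists_norm_eq_iInf_of_complete_convex hne hc.isComplete hconv a
    exact ⟨p, hp, (norm_eq_iInf_iff_real_inner_le_zero hconv hp).1 hmin⟩
  choose P hPX hP using hproj
  -- a solution is a fixed point of the projected gradient step `u ↦ P (u + γ F u)`,
  -- a contraction since `P` is nonexpansive
  set γ := m / (L ^ 2 + m ^ 2)
  set q := L ^ 2 / (L ^ 2 + m ^ 2)
  have hq1 : q < 1 := by rw [div_lt_one (by positivity)]; linarith [pow_pos hm 2]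
  have : Nonempty X := hne.to_subtype
  have : CompleteSpace X := hc.completeSpace_coe
  let T : X → X := fun u => ⟨P (u + γ • F u), hPX _⟩
  have hT : ContractingWith (√q).toNNReal T := by
    refine ⟨Real.toNNReal_lt_one.2 ((Real.sqrt_lt' one_pos).2 (by rw [one_pow]; exact hq1)),
      LipschitzWith.of_dist_le_mul fun u v => ?_⟩
    simp only [Subtype.dist_eq, dist_eq_norm, Real.coe_toNNReal _ (Real.sqrt_nonneg q), T]
    refine (norm_sub_le_of_inner_le_zero (hP _ _ (hPX _)) (hP _ _ (hPX _))).trans ?_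
    rw [show u + γ • F u - (v + γ • F v) = (u - v : E) + γ • (F u - F v) by rw [smul_sub]; abel]
    exact norm_add_smul_le_of_inner_le hm (hmono u u.2 v v.2) (hlip u u.2 v v.2)
  set x := hT.fixedPoint T
  have hx : P (x + γ • F x) = x := congrArg Subtype.val hT.fixedPoint_isFixedPt
  refine ⟨x, x.2, fun w hw => ?_⟩
  have := hP (x + γ • F x) w hw
  rw [hx, add_sub_cancel_left, real_inner_smul_left] at this
  exact nonpos_of_mul_nonpos_right this (by positivity)

theorem eq_of_forall_inner_le_zero_of_strongMono {X : Set E} {F : E → E} {m : ℝ} (hm : 0 < m)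
    (hmono : ∀ u ∈ X, ∀ v ∈ X, ⟪F u - F v, u - v⟫ ≤ -(m * ‖u - v‖ ^ 2))
    {x y : E} (hx : x ∈ X) (hy : y ∈ X) (hxw : ∀ w ∈ X, ⟪F x, w - x⟫ ≤ 0)
    (hyw : ∀ w ∈ X, ⟪F y, w - y⟫ ≤ 0) : x = y := by
  have h := hmono x hx y hy
  have hx' := hxw y hy
  have hy' := hyw x hx
  rw [show y - x = -(x - y) by abel, inner_neg_right] at hx'
  rw [inner_sub_left] at h
  have : ‖x - y‖ ^ 2 = 0 := le_antisymm (by nlinarith) (sq_nonneg _)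
  simpa [sub_eq_zero] using this

theorem existsUnique_forall_inner_le_zero_of_strongMono [CompleteSpace E] {X : Set E}
    (hne : X.Nonempty) (hc : IsClosed X) (hconv : Convex ℝ X) {F : E → E} {m L : ℝ} (hm : 0 < m)
    (hmono : ∀ u ∈ X, ∀ v ∈ X, ⟪F u - F v, u - v⟫ ≤ -(m * ‖u - v‖ ^ 2))
    (hlip : ∀ u ∈ X, ∀ v ∈ X, ‖F u - F v‖ ≤ L * ‖u - v‖) :
    ∃! x, x ∈ X ∧ ∀ w ∈ X, ⟪F x, w - x⟫ ≤ 0 := by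
  obtain ⟨x, hx, hxw⟩ := exists_forall_inner_le_zero_of_strongMono hne hc hconv hm hmono hlip
  exact ⟨x, ⟨hx, hxw⟩, fun y ⟨hy, hyw⟩ =>
    eq_of_forall_inner_le_zero_of_strongMono hm hmono hy hx hyw hxw⟩

end VariationalInequality

section Profiles

variable {ι κ : Type*} [Fintype ι] [Fintype κ]

noncomputable def toL2 : (ι → κ → ℝ) ≃L[ℝ] EuclideanSpace ℝ (ι × κ) :=
  ((LinearEquiv.curry ℝ ℝ ι κ).symm ≪≫ₗ
    (WithLp.linearEquiv 2 ℝ (ι × κ → ℝ)).symm).toContinuousLinearEquiv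

theorem inner_toL2 (x y : ι → κ → ℝ) : ⟪toL2 x, toL2 y⟫ = ∑ i, ∑ k, x i k * y i k := by
  simp [PiLp.inner_apply, Fintype.sum_prod_type, toL2, mul_comm]

theorem norm_toL2_sq (x : ι → κ → ℝ) : ‖toL2 x‖ ^ 2 = ∑ i, ∑ k, x i k ^ 2 := by
  rw [← real_inner_self_eq_norm_sq, inner_toL2]
  simp [sq]

theorem forall_sum_nonpos_iff [DecidableEq ι] {α : ι → Type*} {S : ∀ i, Set (α i)}
    {f : ∀ i, α i → ℝ} {x : ∀ i, α i} (hx : ∀ i, x i ∈ S i) (hfx : ∀ i, f i (x i) = 0) :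
    (∀ w : ∀ i, α i, (∀ i, w i ∈ S i) → ∑ i, f i (w i) ≤ 0) ↔ ∀ i, ∀ y ∈ S i, f i y ≤ 0 := by
  refine ⟨fun h i y hy => ?_, fun h w hw => sum_nonpos fun i _ => h i (w i) (hw i)⟩
  have hw : ∀ j, Function.update x i y j ∈ S j := fun j => by
    rcases eq_or_ne j i with rfl | hj
    · simpa using hy
    · simpa [hj] using hx j
  have := h _ hw
  rwa [sum_eq_single i (fun j _ hj => by simpa [hj] using hfx j) (by simp),
    Function.update_self] at this

theorem existsUnique_forall_sum_mul_le_zero {S : Set (ι → κ → ℝ)} (hne : S.Nonempty)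
    (hc : IsClosed S) (hconv : Convex ℝ S) {G : (ι → κ → ℝ) → ι → κ → ℝ} {m L : ℝ} (hm : 0 < m)
    (hmono : ∀ x ∈ S, ∀ y ∈ S, ∑ i, ∑ k, (x i k - y i k) * (G x i k - G y i k)
      ≤ -(m * ∑ i, ∑ k, (x i k - y i k) ^ 2))
    (hlip : ∀ x ∈ S, ∀ y ∈ S, ∑ i, ∑ k, (G x i k - G y i k) ^ 2
      ≤ L ^ 2 * ∑ i, ∑ k, (x i k - y i k) ^ 2) :
    ∃! x, x ∈ S ∧ ∀ w ∈ S, ∑ i, ∑ k, (w i k - x i k) * G x i k ≤ 0 := by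
  set X : Set (EuclideanSpace ℝ (ι × κ)) := toL2.symm ⁻¹' S
  set F : EuclideanSpace ℝ (ι × κ) → EuclideanSpace ℝ (ι × κ) := fun v => toL2 (G (toL2.symm v))
  have hmem : ∀ x, toL2 x ∈ X ↔ x ∈ S := fun x => by simp [X]
  have hmonoX : ∀ u ∈ X, ∀ v ∈ X, ⟪F u - F v, u - v⟫ ≤ -(m * ‖u - v‖ ^ 2) := by
    simp only [toL2.surjective.forall, hmem]
    intro x hx y hy
    simpa [F, ← map_sub, inner_toL2, norm_toL2_sq, mul_comm] using hmono x hx y hy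
  have hlipX : ∀ u ∈ X, ∀ v ∈ X, ‖F u - F v‖ ≤ |L| * ‖u - v‖ := by
    simp only [toL2.surjective.forall, hmem]
    intro x hx y hy
    rw [← pow_le_pow_iff_left₀ (norm_nonneg _) (by positivity) two_ne_zero, mul_pow, sq_abs]
    simpa [F, ← map_sub, norm_toL2_sq] using hlip x hx y hy
  have hVI : ∀ x, (x ∈ S ∧ ∀ w ∈ S, ∑ i, ∑ k, (w i k - x i k) * G x i k ≤ 0) ↔
      (toL2 x ∈ X ∧ ∀ w ∈ X, ⟪F (toL2 x), w - toL2 x⟫ ≤ 0) := fun x => by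
    simp [toL2.surjective.forall, hmem, F, ← map_sub, inner_toL2, mul_comm]
  obtain ⟨x₀, hx₀⟩ := hne
  obtain ⟨v, hv, huniq⟩ := existsUnique_forall_inner_le_zero_of_strongMono
    ⟨toL2 x₀, (hmem x₀).2 hx₀⟩ (hc.preimage toL2.symm.continuous)
    (hconv.linear_preimage toL2.symm.toLinearMap) hm hmonoX hlipX
  refine ⟨toL2.symm v, (hVI _).2 (by simpa using hv), fun y hy => ?_⟩
  rw [← huniq _ ((hVI y).1 hy), ContinuousLinearEquiv.symm_apply_apply]

end Profiles

section Game

variable {ι κ : Type*} [Fintype ι] (W ε β : κ → ℝ)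

noncomputable def pseudoGradient (x : ι → κ → ℝ) (i : ι) (k : κ) : ℝ :=
  contestGrad (W k) (ε k) (fun j => x j k) i - β k

variable {W ε β}

theorem tullockDeriv_eq_pseudoGradient (x : ι → κ → ℝ) (i : ι) (k : κ) :
    tullockDeriv (W k) (β k) (∑ j, x j k + ε k - x i k) (x i k) = pseudoGradient W ε β x i k := by
  simp only [tullockDeriv, pseudoGradient, contestGrad]
  ring_nf

theorem pseudoGradient_sub (x y : ι → κ → ℝ) (i : ι) (k : κ) :
    pseudoGradient W ε β x i k - pseudoGradient W ε β y i k =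
      contestGrad (W k) (ε k) (fun j => x j k) i - contestGrad (W k) (ε k) (fun j => y j k) i :=
  sub_sub_sub_cancel_right _ _ _

variable [Fintype κ] (W ε β) (R : ι → ℝ)

def budgetSet (r : ℝ) : Set (κ → ℝ) := {x | (∀ k, 0 ≤ x k) ∧ ∑ k, x k = r}

noncomputable def payoff (i : ι) (x : ι → κ → ℝ) : ℝ :=
  ∑ k, (W k * x i k / ((∑ j, x j k) + ε k) - β k * x i k)

def IsNashEquilibrium [DecidableEq ι] (x : ι → κ → ℝ) : Prop :=
  (∀ i, x i ∈ budgetSet (R i)) ∧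
    ∀ i, ∀ y ∈ budgetSet (R i), payoff W ε β i (Function.update x i y) ≤ payoff W ε β i x

variable {W ε β R}

theorem convex_budgetSet (r : ℝ) : Convex ℝ (budgetSet (κ := κ) r) := by
  rintro x ⟨hx0, hx⟩ y ⟨hy0, hy⟩ a b ha hb hab
  refine ⟨fun k => ?_, ?_⟩
  · simp only [Pi.add_apply, Pi.smul_apply, smul_eq_mul]
    nlinarith [hx0 k, hy0 k]
  · simp only [Pi.add_apply, Pi.smul_apply, smul_eq_mul, sum_add_distrib, ← mul_sum, hx, hy]
    rw [← add_mul, hab, one_mul]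

theorem isClosed_budgetSet (r : ℝ) : IsClosed (budgetSet (κ := κ) r) := by
  have h : IsClosed {x : κ → ℝ | ∀ k, 0 ≤ x k} := by
    simp only [Set.ofPred_forall]
    exact isClosed_iInter fun k => isClosed_le continuous_const (continuous_apply k)
  exact h.inter (isClosed_eq (continuous_finsetSum _ fun k _ => continuous_apply k)
    continuous_const)

theorem nonempty_budgetSet [Nonempty κ] {r : ℝ} (hr : 0 ≤ r) : (budgetSet (κ := κ) r).Nonempty := by
  refine ⟨fun _ => r / Fintype.card κ, fun k => by positivity, ?_⟩
  have : (Fintype.card κ : ℝ) ≠ 0 := Nat.cast_ne_zero.2 Fintype.card_ne_zero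
  simp only [sum_const, card_univ, nsmul_eq_mul]
  field_simp

theorem sum_le_sum_of_mem_budgetSet {x : ι → κ → ℝ} (hx : ∀ i, x i ∈ budgetSet (R i)) (k : κ) :
    ∑ i, x i k ≤ ∑ i, R i :=
  sum_le_sum fun i _ => (hx i).2 ▸ single_le_sum (fun k _ => (hx i).1 k) (mem_univ k)

theorem payoff_update [DecidableEq ι] (x : ι → κ → ℝ) (i : ι) (y : κ → ℝ) :
    payoff W ε β i (Function.update x i y) =
      ∑ k, tullock (W k) (β k) (∑ j, x j k + ε k - x i k) (y k) := by
  refine sum_congr rfl fun k _ => ?_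
  have hcol : ∑ j, Function.update x i y j k = y k + (∑ j, x j k - x i k) := by
    rw [← sum_erase_eq_sub (mem_univ i), ← add_sum_erase _ _ (mem_univ i)]
    simp only [Function.update_self]
    congr 1
    exact sum_congr rfl fun j hj => by simp [(mem_erase.1 hj).1]
  simp only [tullock, hcol, Function.update_self]
  ring_nf

theorem isNashEquilibrium_iff [DecidableEq ι] (hW : ∀ k, 0 ≤ W k) (hε : ∀ k, 0 < ε k)
    {x : ι → κ → ℝ} :
    IsNashEquilibrium W ε β R x ↔ (∀ i, x i ∈ budgetSet (R i)) ∧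
      ∀ w : ι → κ → ℝ, (∀ i, w i ∈ budgetSet (R i)) →
        ∑ i, ∑ k, (w i k - x i k) * pseudoGradient W ε β x i k ≤ 0 := by
  refine and_congr_right fun hx => ?_
  rw [forall_sum_nonpos_iff (f := fun i v => ∑ k, (v k - x i k) * pseudoGradient W ε β x i k) hx
    fun i => by simp]
  refine forall_congr' fun i => ?_
  have hc : ∀ k, 0 < ∑ j, x j k + ε k - x i k := fun k => by
    have := single_le_sum (f := fun j => x j k) (fun j _ => (hx j).1 k) (mem_univ i)
    linarith [hε k]
  have hmax := isMaxOn_sum_tullock_iff (β := β) (convex_budgetSet (R i)) (fun y hy => hy.1) hW hc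
    (hx i)
  simp only [isMaxOn_iff, tullockDeriv_eq_pseudoGradient] at hmax
  have hself : payoff W ε β i x = ∑ k, tullock (W k) (β k) (∑ j, x j k + ε k - x i k) (x i k) := by
    simpa using payoff_update (W := W) (ε := ε) (β := β) x i (x i)
  simp only [payoff_update]
  rw [hself]
  exact hmax

theorem pseudoGradient_strongMono (hW : ∀ k, 0 ≤ W k) (hε : ∀ k, 0 < ε k) {m : ℝ}
    (hm : ∀ k, m ≤ W k * ε k / (∑ i, R i + ε k) ^ 3) {x y : ι → κ → ℝ}
    (hx : ∀ i, x i ∈ budgetSet (R i)) (hy : ∀ i, y i ∈ budgetSet (R i)) :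
    ∑ i, ∑ k, (x i k - y i k) * (pseudoGradient W ε β x i k - pseudoGradient W ε β y i k)
      ≤ -(m * ∑ i, ∑ k, (x i k - y i k) ^ 2) := by
  simp only [pseudoGradient_sub]
  rw [sum_comm, sum_comm (f := fun i k => (x i k - y i k) ^ 2), mul_sum, ← sum_neg_distrib]
  refine sum_le_sum fun k _ => (contestGrad_strongMono (hW k) (hε k) (fun i => (hx i).1 k)
    (fun i => (hy i).1 k) (sum_le_sum_of_mem_budgetSet hx k)
    (sum_le_sum_of_mem_budgetSet hy k)).trans ?_
  exact neg_le_neg (mul_le_mul_of_nonneg_right (hm k) (sum_nonneg fun i _ => sq_nonneg _))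

theorem pseudoGradient_lipschitz (hW : ∀ k, 0 ≤ W k) (hε : ∀ k, 0 < ε k) {L : ℝ}
    (hL : ∀ k, Fintype.card ι * (4 * W k / ε k ^ 2) ≤ L) {x y : ι → κ → ℝ}
    (hx : ∀ i k, 0 ≤ x i k) (hy : ∀ i k, 0 ≤ y i k) :
    ∑ i, ∑ k, (pseudoGradient W ε β x i k - pseudoGradient W ε β y i k) ^ 2
      ≤ L ^ 2 * ∑ i, ∑ k, (x i k - y i k) ^ 2 := by
  simp only [pseudoGradient_sub]
  rw [sum_comm, sum_comm (f := fun i k => (x i k - y i k) ^ 2), mul_sum]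
  refine sum_le_sum fun k _ => (sum_sq_contestGrad_sub_le (hW k) (hε k) (fun i => hx i k)
    (fun i => hy i k)).trans ?_
  have h0 : 0 ≤ Fintype.card ι * (4 * W k / ε k ^ 2) := by have := hW k; positivity
  gcongr
  exact hL k

theorem existsUnique_isNashEquilibrium [DecidableEq ι] [Nonempty κ] (hW : ∀ k, 0 < W k)
    (hε : ∀ k, 0 < ε k) (hR : ∀ i, 0 ≤ R i) : ∃! x, IsNashEquilibrium W ε β R x := by
  obtain ⟨k₀, hk₀⟩ := Finite.exists_min fun k => W k * ε k / (∑ i, R i + ε k) ^ 3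
  obtain ⟨k₁, hk₁⟩ := Finite.exists_max fun k => Fintype.card ι * (4 * W k / ε k ^ 2)
  have hW' : ∀ k, 0 ≤ W k := fun k => (hW k).le
  have hm : 0 < W k₀ * ε k₀ / (∑ i, R i + ε k₀) ^ 3 := by
    have := hW k₀; have := hε k₀; have := sum_nonneg fun i (_ : i ∈ univ) => hR i
    positivity
  simpa only [isNashEquilibrium_iff hW' hε, Set.mem_univ_pi] using
    existsUnique_forall_sum_mul_le_zero (S := Set.univ.pi fun i => budgetSet (R i))
      (Set.univ_pi_nonempty_iff.2 fun i => nonempty_budgetSet (hR i))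
      (isClosed_set_pi fun i _ => isClosed_budgetSet (R i))
      (convex_pi fun i _ => convex_budgetSet (R i)) hm
      (fun x hx y hy => pseudoGradient_strongMono hW' hε hk₀ (Set.mem_univ_pi.1 hx)
        (Set.mem_univ_pi.1 hy))
      (fun x hx y hy => pseudoGradient_lipschitz hW' hε hk₁ (fun i => (Set.mem_univ_pi.1 hx i).1)
        (fun i => (Set.mem_univ_pi.1 hy i).1))

end Game

end BlottoTullock

theorem stmt11_general (N K : ℕ) (hK : 1 ≤ K)
    (W ε : Fin K → ℝ) (β : Fin K → ℝ)
    (hW : ∀ k, 0 < W k) (hε : ∀ k, 0 < ε k)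
    (R : Fin N → ℝ) (hR : ∀ i, 0 < R i) :
    let X : Fin N → Set (Fin K → ℝ) := fun i =>
      {x | (∀ k, 0 ≤ x k) ∧ ∑ k, x k = R i}
    let u : Fin N → (Fin N → Fin K → ℝ) → ℝ := fun i x =>
      ∑ k, (W k * x i k / ((∑ j, x j k) + ε k) - β k * x i k)
    ∃! xb : Fin N → Fin K → ℝ,
      (∀ i, xb i ∈ X i) ∧
      ∀ i : Fin N, ∀ y ∈ X i, u i (Function.update xb i y) ≤ u i xb := by
  intro X u
  have : Nonempty (Fin K) := ⟨⟨0, hK⟩⟩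
  exact BlottoTullock.existsUnique_isNashEquilibrium hW hε fun i => (hR i).le

/-- The Blotto lossy Tullock game (Section V-B): budgets `R_i > 0`, simplex-type
strategy sets, payoffs `u_i(x) = Σ_k [W_k x_{i,k}/(Σ_j x_{j,k} + ε_k) − β_k x_{i,k}]`;
the game admits exactly one Nash equilibrium. -/
theorem stmt11 (N K : ℕ) (hN : 1 ≤ N) (hK : 1 ≤ K)
    (W ε : Fin K → ℝ) (β : Fin K → ℝ)
    (hW : ∀ k, 0 < W k) (hε : ∀ k, 0 < ε k)
    (R : Fin N → ℝ) (hR : ∀ i, 0 < R i) :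
    let X : Fin N → Set (Fin K → ℝ) := fun i =>
      {x | (∀ k, 0 ≤ x k) ∧ ∑ k, x k = R i}
    let u : Fin N → (Fin N → Fin K → ℝ) → ℝ := fun i x =>
      ∑ k, (W k * x i k / ((∑ j, x j k) + ε k) - β k * x i k)
    ∃! xb : Fin N → Fin K → ℝ,
      (∀ i, xb i ∈ X i) ∧
      ∀ i : Fin N, ∀ y ∈ X i, u i (Function.update xb i y) ≤ u i xb :=
  stmt11_general N K hK W ε β hW hε R hR
end

section
/- Fix an integer K ≥ 1 and, for each k ∈ {0,…,K−1}, reals W_k > 0, ε_k > 0 and α_k ∈ ℝ; fix an integer N ≥ 1 and a real R > 0. Set W̄_k = W_k·(N−1) and define, for t > max_k(−α_k), f(t) = Σ_{k=0}^{K−1} ( W̄_k + √(W̄_k² + 4·W_k·ε_k·(α_k + t)) )/( 2·(α_k + t) ) − R − Σ_{k=0}^{K−1} ε_k. Then f is strictly decreasing on the interval (max_k(−α_k), ∞), f(t) → +∞ as t decreases to max_k(−α_k), f(t) → −R − Σ_k ε_k < 0 as t → ∞, and consequently f has exactly one zero in (max_k(−α_k), ∞). -/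
/-!
Each summand of `f` is `x(α_k + t)`, where `x(s) = (a + √(a² + b s)) / (2 s)` with `a ≥ 0`,
`b > 0`. Rationalising, `x(s) = b / (2 (√(a² + b s) − a))`, whose denominator is continuous,
strictly increasing, vanishes at `s = 0` and tends to `+∞`. Hence every summand strictly
decreases and tends to `0` at `+∞`, while the summand realising `max_k(−α_k)` blows up at the
left endpoint. The intermediate value theorem and strict monotonicity give the unique zero.
-/

open Finset Filter Set Topology

/-- The positive root of `s x² − a x − b / 4 = 0`. -/
noncomputable def quadRoot (a b s : ℝ) : ℝ :=
  (a + √(a ^ 2 + b * s)) / (2 * s)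

section QuadRoot

variable {a b : ℝ}

lemma lt_sqrt_sq_add_mul (ha : 0 ≤ a) (hb : 0 < b) {s : ℝ} (hs : 0 < s) :
    a < √(a ^ 2 + b * s) :=
  (Real.lt_sqrt ha).2 (by nlinarith)

lemma quadRoot_eq_div (ha : 0 ≤ a) (hb : 0 < b) {s : ℝ} (hs : 0 < s) :
    quadRoot a b s = b / (2 * (√(a ^ 2 + b * s) - a)) := by
  have hlt := lt_sqrt_sq_add_mul ha hb hs
  have hsq : √(a ^ 2 + b * s) ^ 2 = a ^ 2 + b * s := Real.sq_sqrt (by nlinarith)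
  rw [quadRoot, div_eq_div_iff (by positivity) (by linarith)]
  linear_combination 2 * hsq

lemma quadRoot_nonneg (ha : 0 ≤ a) {s : ℝ} (hs : 0 ≤ s) : 0 ≤ quadRoot a b s := by
  unfold quadRoot
  positivity

lemma strictAntiOn_quadRoot (ha : 0 ≤ a) (hb : 0 < b) : StrictAntiOn (quadRoot a b) (Ioi 0) := by
  intro s (hs : 0 < s) t (ht : 0 < t) hst
  rw [quadRoot_eq_div ha hb hs, quadRoot_eq_div ha hb ht]
  have hlt := lt_sqrt_sq_add_mul ha hb hs
  have hsqrt : √(a ^ 2 + b * s) < √(a ^ 2 + b * t) :=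
    Real.sqrt_lt_sqrt (by positivity) (by gcongr)
  gcongr

lemma continuousOn_quadRoot : ContinuousOn (quadRoot a b) (Ioi 0) := by
  unfold quadRoot
  fun_prop (disch := intro s hs; exact (mul_pos two_pos hs).ne')

lemma tendsto_quadRoot_nhdsGT_zero (ha : 0 ≤ a) (hb : 0 < b) :
    Tendsto (quadRoot a b) (𝓝[>] 0) atTop := by
  have hden : Tendsto (fun s => 2 * (√(a ^ 2 + b * s) - a)) (𝓝[>] 0) (𝓝[>] 0) := by
    have hcont : ContinuousWithinAt (fun s => 2 * (√(a ^ 2 + b * s) - a)) (Ioi 0) 0 := by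
      fun_prop
    have hmaps : MapsTo (fun s => 2 * (√(a ^ 2 + b * s) - a)) (Ioi 0) (Ioi 0) :=
      fun s (hs : 0 < s) => show (0 : ℝ) < _ by linarith [lt_sqrt_sq_add_mul ha hb hs]
    simpa [Real.sqrt_sq ha] using hcont.tendsto_nhdsWithin hmaps
  refine (hden.inv_tendsto_nhdsGT_zero.const_mul_atTop hb).congr' ?_
  filter_upwards [self_mem_nhdsWithin] with s hs
  rw [quadRoot_eq_div ha hb hs, Pi.inv_apply, div_eq_mul_inv]

lemma tendsto_quadRoot_atTop (ha : 0 ≤ a) (hb : 0 < b) :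
    Tendsto (quadRoot a b) atTop (𝓝 0) := by
  have hden : Tendsto (fun s => 2 * (√(a ^ 2 + b * s) - a)) atTop atTop := by
    refine Tendsto.const_mul_atTop two_pos (tendsto_atTop_add_const_right _ _ ?_)
    exact Real.tendsto_sqrt_atTop.comp
      (tendsto_atTop_add_const_left _ _ (tendsto_id.const_mul_atTop hb))
  refine ((tendsto_const_nhds (x := b)).div_atTop hden).congr' ?_
  filter_upwards [eventually_gt_atTop 0] with s hs
  rw [quadRoot_eq_div ha hb hs]

end QuadRoot

lemma strictAntiOn_finset_sum {ι β M : Type*} [Preorder β] [AddCommMonoid M] [PartialOrder M]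
    [IsOrderedCancelAddMonoid M] {s : Finset ι} {f : ι → β → M}
    {t : Set β} (hs : s.Nonempty) (hf : ∀ i ∈ s, StrictAntiOn (f i) t) :
    StrictAntiOn (fun x => ∑ i ∈ s, f i x) t :=
  fun _ hx _ hy hxy => sum_lt_sum_of_nonempty hs fun i hi => hf i hi hx hy hxy

lemma tendsto_finset_sum_atTop_of_nonneg {ι β M : Type*} [AddCommMonoid M] [PartialOrder M]
    [IsOrderedAddMonoid M] {s : Finset ι} {f : ι → β → M}
    {l : Filter β} (hf : ∀ i ∈ s, ∀ᶠ x in l, 0 ≤ f i x) {i₀ : ι} (hi₀ : i₀ ∈ s)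
    (h : Tendsto (f i₀) l atTop) : Tendsto (fun x => ∑ i ∈ s, f i x) l atTop := by
  refine tendsto_atTop_mono' l ?_ h
  filter_upwards [(s.eventually_all).2 hf] with x hx
  exact single_le_sum hx hi₀

lemma existsUnique_zero_of_strictAntiOn_Ioi {f : ℝ → ℝ} {T : ℝ}
    (hcont : ContinuousOn f (Ioi T)) (hanti : StrictAntiOn f (Ioi T))
    (hleft : Tendsto f (𝓝[>] T) atTop) (hright : ∀ᶠ t in atTop, f t < 0) :
    ∃! t, t ∈ Ioi T ∧ f t = 0 := by
  obtain ⟨t₀, ht₀, hft₀⟩ : ∃ t₀ ∈ Ioi T, 0 < f t₀ :=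
    ((eventually_mem_nhdsWithin).and (hleft.eventually_gt_atTop 0)).exists
  obtain ⟨t₁, ht₀₁, hft₁⟩ := ((eventually_gt_atTop t₀).and hright).exists
  have hIcc : Icc t₀ t₁ ⊆ Ioi T := fun x hx => lt_of_lt_of_le ht₀ hx.1
  obtain ⟨c, hc, hfc⟩ :=
    intermediate_value_Icc' ht₀₁.le (hcont.mono hIcc) ⟨hft₁.le, hft₀.le⟩
  exact ⟨c, ⟨hIcc hc, hfc⟩, fun y hy => hanti.injOn hy.1 (hIcc hc) (hy.2.trans hfc.symm)⟩

section QuadRootSum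

variable {ι : Type*} {a b c : ι → ℝ} {T : ℝ}

lemma mapsTo_add_Ioi (hT : ∀ i, -c i ≤ T) (i : ι) : MapsTo (c i + ·) (Ioi T) (Ioi 0) :=
  fun t (ht : T < t) => show 0 < c i + t by linarith [hT i]

variable [Fintype ι]

noncomputable def quadRootSum (a b c : ι → ℝ) (t : ℝ) : ℝ :=
  ∑ i, quadRoot (a i) (b i) (c i + t)

lemma continuousOn_quadRootSum (hT : ∀ i, -c i ≤ T) : ContinuousOn (quadRootSum a b c) (Ioi T) :=
  continuousOn_finsetSum _ fun i _ =>
    continuousOn_quadRoot.comp (continuous_const_add (c i)).continuousOn (mapsTo_add_Ioi hT i)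

lemma strictAntiOn_quadRootSum [Nonempty ι] (ha : ∀ i, 0 ≤ a i) (hb : ∀ i, 0 < b i)
    (hT : ∀ i, -c i ≤ T) : StrictAntiOn (quadRootSum a b c) (Ioi T) :=
  strictAntiOn_finset_sum univ_nonempty fun i _ =>
    (strictAntiOn_quadRoot (ha i) (hb i)).comp_strictMonoOn
      (add_right_strictMono.strictMonoOn _) (mapsTo_add_Ioi hT i)

lemma tendsto_quadRootSum_nhdsGT (ha : ∀ i, 0 ≤ a i) (hb : ∀ i, 0 < b i)
    (hT : ∀ i, -c i ≤ T) {i₀ : ι} (hi₀ : c i₀ + T = 0) :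
    Tendsto (quadRootSum a b c) (𝓝[>] T) atTop := by
  refine tendsto_finset_sum_atTop_of_nonneg (fun i _ => ?_) (mem_univ i₀) ?_
  · filter_upwards [self_mem_nhdsWithin] with t ht
    exact quadRoot_nonneg (ha i) (mapsTo_add_Ioi hT i ht).le
  · have hshift := ((continuous_const_add (c i₀)).continuousWithinAt (x := T)).tendsto_nhdsWithin
      (mapsTo_add_Ioi hT i₀)
    rw [hi₀] at hshift
    exact (tendsto_quadRoot_nhdsGT_zero (ha i₀) (hb i₀)).comp hshift

lemma tendsto_quadRootSum_atTop (ha : ∀ i, 0 ≤ a i) (hb : ∀ i, 0 < b i) :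
    Tendsto (quadRootSum a b c) atTop (𝓝 0) := by
  have := tendsto_finsetSum univ fun i _ => (tendsto_quadRoot_atTop (ha i) (hb i)).comp
    (tendsto_atTop_add_const_left _ (c i) tendsto_id)
  rwa [sum_const_zero] at this

end QuadRootSum

/-- Core analytic claim in the proof of Lemma 6: the function (47)
`f(t) = Σ_k (W̄_k + √(W̄_k² + 4 W_k ε_k (α_k + t)))/(2(α_k + t)) − R − Σ_k ε_k`
is strictly decreasing on `(max_k(−α_k), ∞)`, tends to `+∞` at the left endpoint,
tends to the negative limit `−R − Σ_k ε_k` at `+∞`, and hence has exactly one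
zero on that interval. -/
theorem stmt13 (K : ℕ) (hK : 1 ≤ K)
    (W ε α : Fin K → ℝ) (hW : ∀ k, 0 < W k) (hε : ∀ k, 0 < ε k)
    (N : ℕ) (hN : 1 ≤ N) (R : ℝ) (hR : 0 < R) :
    let Wb : Fin K → ℝ := fun k => W k * ((N : ℝ) - 1)
    let T : ℝ := Finset.univ.sup' ⟨(⟨0, hK⟩ : Fin K), Finset.mem_univ _⟩
      (fun k => -α k)
    let f : ℝ → ℝ := fun t =>
      (∑ k, (Wb k + Real.sqrt (Wb k ^ 2 + 4 * W k * ε k * (α k + t))) /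
        (2 * (α k + t))) - R - ∑ k, ε k
    StrictAntiOn f (Set.Ioi T) ∧
    Filter.Tendsto f (nhdsWithin T (Set.Ioi T)) Filter.atTop ∧
    Filter.Tendsto f Filter.atTop (nhds (-R - ∑ k, ε k)) ∧
    (-R - ∑ k, ε k < 0) ∧
    (∃! t : ℝ, t ∈ Set.Ioi T ∧ f t = 0) := by
  intro Wb T f
  have : Nonempty (Fin K) := ⟨⟨0, hK⟩⟩
  have hWb : ∀ k, 0 ≤ Wb k := fun k =>
    mul_nonneg (hW k).le (sub_nonneg.2 (by exact_mod_cast hN))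
  have hb : ∀ k, 0 < 4 * W k * ε k := fun k => mul_pos (mul_pos four_pos (hW k)) (hε k)
  have hT : ∀ k, -α k ≤ T := fun k => le_sup' (fun k => -α k) (mem_univ k)
  obtain ⟨k₀, -, hk₀⟩ := exists_mem_eq_sup' univ_nonempty (fun k => -α k)
  have hf : f = fun t => quadRootSum Wb (fun k => 4 * W k * ε k) α t - R - ∑ k, ε k := rfl
  have hanti : StrictAntiOn f (Ioi T) := fun x hx y hy hxy =>
    sub_lt_sub_right (sub_lt_sub_right (strictAntiOn_quadRootSum hWb hb hT hx hy hxy) R) _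
  have hleft : Tendsto f (𝓝[>] T) atTop := by
    simp only [hf, sub_eq_add_neg]
    refine tendsto_atTop_add_const_right _ _ (tendsto_atTop_add_const_right _ _ ?_)
    exact tendsto_quadRootSum_nhdsGT hWb hb hT (i₀ := k₀) (by simp [T, hk₀])
  have hright : Tendsto f atTop (𝓝 (-R - ∑ k, ε k)) := by
    simpa [hf] using ((tendsto_quadRootSum_atTop hWb hb).sub_const R).sub_const (∑ k, ε k)
  have hneg : -R - ∑ k, ε k < 0 := by
    linarith [sum_pos (fun k _ => hε k) univ_nonempty]
  have hcont : ContinuousOn f (Ioi T) :=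
    ((continuousOn_quadRootSum hT).sub continuousOn_const).sub continuousOn_const
  exact ⟨hanti, hleft, hright, hneg, existsUnique_zero_of_strictAntiOn_Ioi hcont hanti hleft
    (hright.eventually (eventually_lt_nhds hneg))⟩
end

section
/- Fix integers N ≥ 1 and K ≥ 1, parameters W_k > 0, ε_k > 0, β_k ∈ ℝ for k ∈ {0,…,K−1}, budgets R_i > 0, and fixed multipliers λ_{i,k} ≥ 0 for all i ∈ {1,…,N} and k ∈ {0,…,K−1}. Let X_i = {x ∈ ℝ^K : x_k ≥ 0 for all k and Σ_k x_k = R_i}. Then there exists at most one joint strategy x̄ ∈ Π_{i=1}^N X_i for which there exist reals ν_1, …, ν_N satisfying, for every i and every k: ν_i − λ_{i,k} + β_k − W_k·(Σ_{j≠i} x̄_{j,k} + ε_k)/(Σ_{j=1}^N x̄_{j,k} + ε_k)² = 0. -/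
open Finset

/-- Facts about a single solution of the KKT system. -/
lemma sol_facts (N K : ℕ) (W ε : Fin K → ℝ) (β : Fin K → ℝ)
    (hε : ∀ k, 0 < ε k)
    (R : Fin N → ℝ) (lam : Fin N → Fin K → ℝ)
    (x : Fin N → Fin K → ℝ) (ν : Fin N → ℝ)
    (hx1 : ∀ i k, 0 ≤ x i k) (hx2 : ∀ i, ∑ k, x i k = R i)
    (hν : ∀ (i : Fin N) (k : Fin K),
          ν i - lam i k + β k -
            W k * ((∑ j ∈ Finset.univ.erase i, x j k) + ε k) /
              ((∑ j, x j k) + ε k) ^ 2 = 0) :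
    (∀ i k, W k * ((((∑ j, x j k) + ε k)) - x i k)
        = (ν i - lam i k + β k) * ((∑ j, x j k) + ε k) ^ 2)
    ∧ (∀ k, W k * (((N : ℝ) - 1) * ((∑ j, x j k) + ε k) + ε k)
        = ((∑ i, ν i) + ∑ i, (β k - lam i k)) * ((∑ j, x j k) + ε k) ^ 2)
    ∧ (∑ k, ((∑ j, x j k) + ε k)) = (∑ i, R i) + ∑ k, ε k := by
  have ht : ∀ k, 0 < (∑ j, x j k) + ε k := fun k =>
    add_pos_of_nonneg_of_pos (Finset.sum_nonneg fun j _ => hx1 j k) (hε k)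
  have hkey : ∀ i k, W k * ((((∑ j, x j k) + ε k)) - x i k)
      = (ν i - lam i k + β k) * ((∑ j, x j k) + ε k) ^ 2 := by
    intro i k
    have h := hν i k
    have herase : (∑ j ∈ Finset.univ.erase i, x j k) = (∑ j, x j k) - x i k :=
      Finset.sum_erase_eq_sub (Finset.mem_univ i)
    rw [herase] at h
    have ht2 : ((∑ j, x j k) + ε k) ^ 2 ≠ 0 := pow_ne_zero _ (ne_of_gt (ht k))
    have h2 : (ν i - lam i k + β k) * ((∑ j, x j k) + ε k) ^ 2
        = W k * ((∑ j, x j k) - x i k + ε k) := by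
      have h3 : ν i - lam i k + β k =
          W k * ((∑ j, x j k) - x i k + ε k) / ((∑ j, x j k) + ε k) ^ 2 := by
        linarith
      rw [h3, div_mul_cancel₀ _ ht2]
    rw [h2]; ring
  refine ⟨hkey, ?_, ?_⟩
  · intro k
    have hsum : ∑ i, W k * ((((∑ j, x j k) + ε k)) - x i k)
        = ∑ i, (ν i - lam i k + β k) * ((∑ j, x j k) + ε k) ^ 2 :=
      Finset.sum_congr rfl fun i _ => hkey i k
    have h1 : ∑ i : Fin N, ((((∑ j, x j k) + ε k)) - x i k)
        = (N : ℝ) * ((∑ j, x j k) + ε k) - (∑ j, x j k) := by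
      rw [Finset.sum_sub_distrib, Finset.sum_const, Finset.card_univ, Fintype.card_fin,
        nsmul_eq_mul]
    have h2 : ∑ i, (ν i - lam i k + β k)
        = (∑ i, ν i) + ∑ i, (β k - lam i k) := by
      rw [← Finset.sum_add_distrib]
      exact Finset.sum_congr rfl fun i _ => by ring
    calc W k * (((N : ℝ) - 1) * ((∑ j, x j k) + ε k) + ε k)
        = ∑ i, W k * ((((∑ j, x j k) + ε k)) - x i k) := by
          rw [← Finset.mul_sum, h1]; ring
      _ = ∑ i, (ν i - lam i k + β k) * ((∑ j, x j k) + ε k) ^ 2 := hsum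
      _ = ((∑ i, ν i) + ∑ i, (β k - lam i k)) * ((∑ j, x j k) + ε k) ^ 2 := by
          rw [← Finset.sum_mul, h2]
  · rw [Finset.sum_add_distrib, Finset.sum_comm]
    congr 1
    exact Finset.sum_congr rfl fun i _ => hx2 i

/-- Asymmetric version: if the summed multipliers satisfy `∑ν ≤ ∑ν'`, the two
solutions coincide. -/
lemma aux_uniq (N K : ℕ) (hN : 1 ≤ N) (hK : 1 ≤ K)
    (W ε : Fin K → ℝ) (β : Fin K → ℝ)
    (hW : ∀ k, 0 < W k) (hε : ∀ k, 0 < ε k)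
    (R : Fin N → ℝ) (lam : Fin N → Fin K → ℝ)
    (x y : Fin N → Fin K → ℝ)
    (hx1 : ∀ i k, 0 ≤ x i k) (hx2 : ∀ i, ∑ k, x i k = R i)
    (hy1 : ∀ i k, 0 ≤ y i k) (hy2 : ∀ i, ∑ k, y i k = R i)
    (ν ν' : Fin N → ℝ)
    (hνx : ∀ (i : Fin N) (k : Fin K),
          ν i - lam i k + β k -
            W k * ((∑ j ∈ Finset.univ.erase i, x j k) + ε k) /
              ((∑ j, x j k) + ε k) ^ 2 = 0)
    (hνy : ∀ (i : Fin N) (k : Fin K),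
          ν' i - lam i k + β k -
            W k * ((∑ j ∈ Finset.univ.erase i, y j k) + ε k) /
              ((∑ j, y j k) + ε k) ^ 2 = 0)
    (hV : ∑ i, ν i ≤ ∑ i, ν' i) : x = y := by
  obtain ⟨hxeq, hxagg, hxs⟩ := sol_facts N K W ε β hε R lam x ν hx1 hx2 hνx
  obtain ⟨hyeq, hyagg, hys⟩ := sol_facts N K W ε β hε R lam y ν' hy1 hy2 hνy
  have ht : ∀ k, 0 < (∑ j, x j k) + ε k := fun k =>
    add_pos_of_nonneg_of_pos (Finset.sum_nonneg fun j _ => hx1 j k) (hε k)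
  have hs : ∀ k, 0 < (∑ j, y j k) + ε k := fun k =>
    add_pos_of_nonneg_of_pos (Finset.sum_nonneg fun j _ => hy1 j k) (hε k)
  have hc : (0:ℝ) ≤ (N : ℝ) - 1 := by
    have : (1:ℝ) ≤ (N:ℝ) := by exact_mod_cast hN
    linarith
  -- pointwise comparison of the aggregates
  have hle : ∀ k, (∑ j, y j k) + ε k ≤ (∑ j, x j k) + ε k := by
    intro k
    by_contra hlt
    push_neg at hlt
    have hA := hxagg k
    have hB := hyagg k
    have hPpos : 0 < (∑ i, ν i) + ∑ i, (β k - lam i k) := by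
      have hrhs : 0 < W k * (((N : ℝ) - 1) * ((∑ j, x j k) + ε k) + ε k) := by
        have h1 : 0 < ((N : ℝ) - 1) * ((∑ j, x j k) + ε k) + ε k := by
          nlinarith [mul_nonneg hc (ht k).le, hε k]
        exact mul_pos (hW k) h1
      rw [hA] at hrhs
      nlinarith [sq_nonneg ((∑ j, x j k) + ε k)]
    have hinner : 0 < ((N:ℝ)-1) * (((∑ j, x j k) + ε k)) * (((∑ j, y j k) + ε k))
        + ε k * ((((∑ j, y j k) + ε k)) + (((∑ j, x j k) + ε k))) := by
      nlinarith [mul_nonneg hc (mul_pos (ht k) (hs k)).le,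
        mul_pos (hε k) (add_pos (hs k) (ht k))]
    nlinarith [hA, hB, hV, hPpos, hlt,
      mul_pos (hW k) (mul_pos (sub_pos.2 hlt) hinner),
      mul_le_mul_of_nonneg_right hV
        (mul_nonneg (sq_nonneg ((∑ j, x j k) + ε k)) (sq_nonneg ((∑ j, y j k) + ε k)))]
  -- sums are equal, so the aggregates agree
  have hsum0 : ∑ k, (((∑ j, x j k) + ε k) - ((∑ j, y j k) + ε k)) = 0 := by
    rw [Finset.sum_sub_distrib, hxs, hys]; ring
  have hts : ∀ k, ((∑ j, x j k) + ε k) = ((∑ j, y j k) + ε k) := by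
    intro k
    have := (Finset.sum_eq_zero_iff_of_nonneg
      (fun k _ => sub_nonneg.2 (hle k))).1 hsum0 k (Finset.mem_univ k)
    linarith
  -- deduce ∑ ν = ∑ ν'
  have hVeq : ∑ i, ν i = ∑ i, ν' i := by
    have k0 : Fin K := ⟨0, hK⟩
    have hA := hxagg k0
    have hB := hyagg k0
    rw [← hts k0] at hB
    have ht2 : ((∑ j, x j k0) + ε k0) ^ 2 ≠ 0 := pow_ne_zero _ (ne_of_gt (ht k0))
    have h2 := mul_right_cancel₀ ht2 (hA.symm.trans hB)
    linarith
  -- per player: ν i = ν' i and x i k = y i k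
  funext i k
  have hxy : ∀ k, W k * (y i k - x i k) = (ν i - ν' i) * ((∑ j, x j k) + ε k) ^ 2 := by
    intro k
    have h1 := hxeq i k
    have h2 := hyeq i k
    rw [← hts k] at h2
    linear_combination h1 - h2
  have hνi : ν i = ν' i := by
    by_contra hne
    have hsump : 0 < ∑ k, ((∑ j, x j k) + ε k) ^ 2 / W k := by
      have : Nonempty (Fin K) := ⟨⟨0, hK⟩⟩
      exact Finset.sum_pos (fun k _ => div_pos (pow_pos (ht k) 2) (hW k))
        Finset.univ_nonempty
    have hsum : ∑ k, (y i k - x i k)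
        = (ν i - ν' i) * ∑ k, ((∑ j, x j k) + ε k) ^ 2 / W k := by
      rw [Finset.mul_sum]
      refine Finset.sum_congr rfl fun k _ => ?_
      rw [mul_div_assoc', eq_div_iff (ne_of_gt (hW k))]
      linear_combination hxy k
    have h0 : ∑ k, (y i k - x i k) = 0 := by
      rw [Finset.sum_sub_distrib, hx2 i, hy2 i]; ring
    rw [h0] at hsum
    rcases mul_eq_zero.1 hsum.symm with h | h
    · exact hne (by linarith)
    · exact absurd h (ne_of_gt hsump)
  have h := hxy k
  rw [hνi] at h
  have hWk := hW k
  nlinarith [h]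

/-- Lemma 6: for fixed nonnegative multipliers `λ_{i,k}`, there is at most one
feasible joint strategy of the Blotto lossy Tullock game satisfying the
stationarity conditions (42) for some budget multipliers `ν_i`. -/
theorem stmt14 (N K : ℕ) (hN : 1 ≤ N) (hK : 1 ≤ K)
    (W ε : Fin K → ℝ) (β : Fin K → ℝ)
    (hW : ∀ k, 0 < W k) (hε : ∀ k, 0 < ε k)
    (R : Fin N → ℝ) (hR : ∀ i, 0 < R i)
    (lam : Fin N → Fin K → ℝ) (hlam : ∀ i k, 0 ≤ lam i k) :
    ∀ x y : Fin N → Fin K → ℝ,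
      ((∀ i, (∀ k, 0 ≤ x i k) ∧ ∑ k, x i k = R i) ∧
        ∃ ν : Fin N → ℝ, ∀ (i : Fin N) (k : Fin K),
          ν i - lam i k + β k -
            W k * ((∑ j ∈ Finset.univ.erase i, x j k) + ε k) /
              ((∑ j, x j k) + ε k) ^ 2 = 0) →
      ((∀ i, (∀ k, 0 ≤ y i k) ∧ ∑ k, y i k = R i) ∧
        ∃ ν : Fin N → ℝ, ∀ (i : Fin N) (k : Fin K),
          ν i - lam i k + β k -
            W k * ((∑ j ∈ Finset.univ.erase i, y j k) + ε k) /
              ((∑ j, y j k) + ε k) ^ 2 = 0) →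
      x = y := by
  rintro x y ⟨hxfeas, ν, hνx⟩ ⟨hyfeas, ν', hνy⟩
  have hx1 : ∀ i k, 0 ≤ x i k := fun i => (hxfeas i).1
  have hx2 : ∀ i, ∑ k, x i k = R i := fun i => (hxfeas i).2
  have hy1 : ∀ i k, 0 ≤ y i k := fun i => (hyfeas i).1
  have hy2 : ∀ i, ∑ k, y i k = R i := fun i => (hyfeas i).2
  rcases le_total (∑ i, ν i) (∑ i, ν' i) with h | h
  · exact aux_uniq N K hN hK W ε β hW hε R lam x y hx1 hx2 hy1 hy2 ν ν' hνx hνy h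
  · exact (aux_uniq N K hN hK W ε β hW hε R lam y x hy1 hy2 hx1 hx2 ν' ν hνy hνx h).symm
end
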